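/- arXiv:1105.4429 — 6 statements merged into one kernel-verified Lean document; each statement's English description precedes it below -/
import Mathlib

section
/- Blow-up on a finite interval (Proposition 5): Let L > 0. There is no positive function n ∈ C^{1,2}([0,∞)×[0,L]) satisfying ∂_t n(t,z) = ∂_{zz} n(t,z) + (n(t,0) − n(t,L)) ∂_z n(t,z) for t > 0, 0 < z < L, with the zero-flux boundary conditions ∂_z n(t,0) + (n(t,0) − n(t,L)) n(t,0) = 0 and ∂_z n(t,L) + (n(t,0) − n(t,L)) n(t,L) = 0 for all t ≥ 0, such that the initial profile z ↦ n(0,z) is non-increasing, the mass M = ∫₀^L n(0,z) dz satisfies M > 1, and the first moment satisfies 4 ∫₀^L z n(0,z) dz < L·M. -/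
/-!
Everything is driven by the boundary flux `b(t) = n(t,0) - n(t,L)`. Integrating the equation
against `1` and `z` and using the zero-flux conditions, the mass `M` is conserved and the first
moment `J(t) = ∫ z n(t,z) dz` satisfies `J' = b (1 - M)`. A two-point maximum principle shows that
a non-increasing profile stays non-increasing as long as `b > 0`, and for a non-increasing profile
`L M / 2 - J ≤ b L² / 8`. Since `J` does not increase while `b ≥ 0`, this keeps `b` above
`β = 8 (L M / 2 - J(0)) / L² > 0`, so by continuous induction the profile is non-increasing for
all time. Then `J` decreases at rate at least `(M - 1) β` and eventually becomes negative, which is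
impossible for a positive solution.
-/
open MeasureTheory Set Filter Topology Function
open scoped Interval

theorem HasDerivAt.nonneg_of_isMinOn_Icc_left {f : ℝ → ℝ} {f' a b : ℝ} (hab : a < b)
    (hf : HasDerivAt f f' a) (hmin : IsMinOn f (Icc a b) a) : 0 ≤ f' := by
  have hcone : b - a ∈ posTangentConeAt (Icc a b) a :=
    sub_mem_posTangentConeAt_of_segment_subset (segment_eq_Icc hab.le).subset
  have : 0 ≤ (b - a) * f' := by
    simpa using hmin.localize.hasFDerivWithinAt_nonneg hf.hasFDerivAt.hasFDerivWithinAt hcone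
  exact nonneg_of_mul_nonneg_right this (sub_pos.2 hab)

theorem HasDerivAt.nonneg_of_isMaxOn_Icc_right {f : ℝ → ℝ} {f' a b : ℝ} (hab : a < b)
    (hf : HasDerivAt f f' b) (hmax : IsMaxOn f (Icc a b) b) : 0 ≤ f' := by
  have hcone : a - b ∈ posTangentConeAt (Icc a b) b :=
    sub_mem_posTangentConeAt_of_segment_subset (by rw [segment_symm, segment_eq_Icc hab.le])
  have : (a - b) * f' ≤ 0 := by
    simpa using hmax.localize.hasFDerivWithinAt_nonpos hf.hasFDerivAt.hasFDerivWithinAt hcone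
  nlinarith

theorem IsLocalMin.nonneg_of_hasDerivAt_of_hasDerivAt {f f' : ℝ → ℝ} {c f'' : ℝ}
    (hmin : IsLocalMin f c) (hf : ∀ᶠ x in 𝓝 c, HasDerivAt f (f' x) x)
    (hf' : HasDerivAt f' f'' c) : 0 ≤ f'' := by
  by_contra! hneg
  have hcrit : f' c = 0 := hmin.hasDerivAt_eq_zero hf.self_of_nhds
  have hslope : ∀ᶠ x in 𝓝[>] c, slope f' c x < 0 :=
    ((hasDerivAt_iff_tendsto_slope.mp hf').mono_left (nhdsGT_le_nhdsNE c)).eventually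
      (eventually_lt_nhds hneg)
  obtain ⟨u, hcu, hu⟩ := mem_nhdsGT_iff_exists_Ioc_subset.mp
    (((hf.and hmin).filter_mono nhdsWithin_le_nhds).and hslope)
  have hderiv : ∀ x ∈ Icc c u, HasDerivAt f (f' x) x := by
    rintro x ⟨hcx, hxu⟩
    rcases hcx.eq_or_lt with rfl | hcx
    · exact hf.self_of_nhds
    · exact (hu ⟨hcx, hxu⟩).1.1
  obtain ⟨ξ, hξ, hξslope⟩ := exists_hasDerivAt_eq_slope f f' hcu
    (fun x hx => (hderiv x hx).continuousAt.continuousWithinAt)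
    (fun x hx => hderiv x (Ioo_subset_Icc_self hx))
  have hf'ξ : f' ξ < 0 := by
    have := (hu ⟨hξ.1, hξ.2.le⟩).2
    rw [slope_def_field, hcrit, sub_zero] at this
    exact neg_of_div_neg_left this (sub_pos.2 hξ.1).le
  have hfu : f c ≤ f u := (hu ⟨hcu, le_rfl⟩).1.2
  have : 0 ≤ (f u - f c) / (u - c) := div_nonneg (sub_nonneg.2 hfu) (sub_pos.2 hcu).le
  linarith

theorem continuousOn_intervalIntegral_of_continuousOn_prod {F : ℝ → ℝ → ℝ} {S : Set ℝ}
    {a b : ℝ} (hS : IsClosed S) (hab : a ≤ b) (hF : ContinuousOn (uncurry F) (S ×ˢ Icc a b)) :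
    ContinuousOn (fun t => ∫ z in a..b, F t z) S := by
  have hIoc : Ι a b ⊆ Icc a b := uIoc_of_le hab ▸ Ioc_subset_Icc_self
  intro t₀ ht₀
  have hK : IsCompact ((Icc (t₀ - 1) (t₀ + 1) ∩ S) ×ˢ Icc a b) :=
    (isCompact_Icc.inter_right hS).prod isCompact_Icc
  obtain ⟨C, hC⟩ := hK.exists_bound_of_continuousOn
    (hF.mono (prod_mono inter_subset_right subset_rfl))
  refine intervalIntegral.continuousWithinAt_of_dominated_interval (bound := fun _ => C) ?_ ?_
    intervalIntegrable_const (ae_of_all _ fun z hz => hF.uncurry_right z (hIoc hz) t₀ ht₀)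
  · filter_upwards [self_mem_nhdsWithin] with t ht
    exact ((hF.uncurry_left t ht).mono hIoc).aestronglyMeasurable measurableSet_uIoc
  · filter_upwards [self_mem_nhdsWithin, nhdsWithin_le_nhds (Icc_mem_nhds (sub_one_lt t₀)
      (lt_add_one t₀))] with t htS ht
    exact ae_of_all _ fun z hz => hC (t, z) ⟨⟨ht, htS⟩, hIoc hz⟩

theorem hasDerivAt_intervalIntegral_of_continuousOn_prod {F F' : ℝ → ℝ → ℝ} {U : Set ℝ}
    {a b t₀ : ℝ} (hab : a ≤ b) (hU : IsOpen U) (ht₀ : t₀ ∈ U)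
    (hF : ∀ t ∈ U, ContinuousOn (F t) (Icc a b))
    (hF' : ContinuousOn (uncurry F') (U ×ˢ Icc a b))
    (hderiv : ∀ t ∈ U, ∀ z ∈ Icc a b, HasDerivAt (F · z) (F' t z) t) :
    HasDerivAt (fun t => ∫ z in a..b, F t z) (∫ z in a..b, F' t₀ z) t₀ := by
  have hIoc : Ι a b ⊆ Icc a b := uIoc_of_le hab ▸ Ioc_subset_Icc_self
  obtain ⟨r, hr, hrU⟩ := Metric.mem_nhds_iff.mp (hU.mem_nhds ht₀)
  have hball : Metric.closedBall t₀ (r / 2) ⊆ U :=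
    (Metric.closedBall_subset_ball (half_lt_self hr)).trans hrU
  obtain ⟨C, hC⟩ := ((isCompact_closedBall t₀ (r / 2)).prod
    isCompact_Icc).exists_bound_of_continuousOn (hF'.mono (prod_mono hball subset_rfl))
  refine (intervalIntegral.hasDerivAt_integral_of_dominated_loc_of_deriv_le
    (bound := fun _ => C) (Metric.ball_mem_nhds t₀ (half_pos hr)) ?_ ?_ ?_ ?_
    intervalIntegrable_const ?_).2
  · filter_upwards [hU.mem_nhds ht₀] with t ht
    exact ((hF t ht).mono hIoc).aestronglyMeasurable measurableSet_uIoc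
  · exact (hF t₀ ht₀).intervalIntegrable_of_Icc hab
  · exact ((hF'.uncurry_left t₀ ht₀).mono hIoc).aestronglyMeasurable measurableSet_uIoc
  · exact ae_of_all _ fun z hz t ht => hC (t, z) ⟨Metric.ball_subset_closedBall ht, hIoc hz⟩
  · exact ae_of_all _ fun z hz t ht =>
      hderiv t (hball (Metric.ball_subset_closedBall ht)) z (hIoc hz)

section ZeroFlux

variable {u u' u'' : ℝ → ℝ} {a b c : ℝ}

theorem integral_add_mul_eq_zero_of_zero_flux (hab : a ≤ b)
    (hu : ∀ z ∈ Icc a b, HasDerivAt u (u' z) z) (hu' : ∀ z ∈ Icc a b, HasDerivAt u' (u'' z) z)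
    (hu'' : ContinuousOn u'' (Icc a b))
    (ha : u' a + c * u a = 0) (hb : u' b + c * u b = 0) :
    ∫ z in a..b, (u'' z + c * u' z) = 0 := by
  have hcont : ContinuousOn u' (Icc a b) :=
    fun z hz => (hu' z hz).continuousAt.continuousWithinAt
  rw [intervalIntegral.integral_eq_sub_of_hasDerivAt (f := fun z => u' z + c * u z)
    (fun z hz => (hu' z (uIcc_of_le hab ▸ hz)).add ((hu z (uIcc_of_le hab ▸ hz)).const_mul c))
    ((hu''.add (hcont.const_smul c)).intervalIntegrable_of_Icc hab), ha, hb, sub_zero]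

theorem integral_mul_add_mul_of_zero_flux (hab : a ≤ b)
    (hu : ∀ z ∈ Icc a b, HasDerivAt u (u' z) z) (hu' : ∀ z ∈ Icc a b, HasDerivAt u' (u'' z) z)
    (hu'' : ContinuousOn u'' (Icc a b))
    (ha : u' a + c * u a = 0) (hb : u' b + c * u b = 0) :
    ∫ z in a..b, z * (u'' z + c * u' z) = u a - u b - c * ∫ z in a..b, u z := by
  have hucont : ContinuousOn u (Icc a b) :=
    fun z hz => (hu z hz).continuousAt.continuousWithinAt
  have hu'cont : ContinuousOn u' (Icc a b) :=
    fun z hz => (hu' z hz).continuousAt.continuousWithinAt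
  have hprim : ∀ z ∈ [[a, b]], HasDerivAt (fun z => z * (u' z + c * u z) - u z)
      (z * (u'' z + c * u' z) + c * u z) z := by
    intro z hz
    rw [uIcc_of_le hab] at hz
    exact (((hasDerivAt_id' z).mul ((hu' z hz).add ((hu z hz).const_mul c))).sub
      (hu z hz)).congr_deriv (by simp only [Pi.add_apply]; ring)
  have hint : IntervalIntegrable (fun z => z * (u'' z + c * u' z)) volume a b :=
    (continuousOn_id.mul (hu''.add (hu'cont.const_smul c))).intervalIntegrable_of_Icc hab
  have hintu : IntervalIntegrable (fun z => c * u z) volume a b :=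
    (hucont.const_smul c).intervalIntegrable_of_Icc hab
  have := intervalIntegral.integral_eq_sub_of_hasDerivAt hprim (hint.add hintu)
  rw [intervalIntegral.integral_add hint hintu, intervalIntegral.integral_const_mul] at this
  simp only [ha, hb, mul_zero] at this
  linarith

end ZeroFlux

theorem AntitoneOn.half_mul_integral_sub_integral_mul_le {f : ℝ → ℝ} {L : ℝ} (hL : 0 ≤ L)
    (hf : AntitoneOn f (Icc 0 L)) :
    L / 2 * (∫ z in (0 : ℝ)..L, f z) - ∫ z in (0 : ℝ)..L, z * f z ≤ (f 0 - f L) * L ^ 2 / 8 := by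
  have hfint : IntervalIntegrable f volume 0 L := (uIcc_of_le hL ▸ hf).intervalIntegrable
  have hgint : ∀ a b, a ∈ Icc 0 L → b ∈ Icc 0 L →
      IntervalIntegrable (fun z => (L / 2 - z) * f z) volume a b := fun a b ha hb =>
    (hfint.mono_set (uIcc_subset_uIcc (uIcc_of_le hL ▸ ha) (uIcc_of_le hL ▸ hb))).continuousOn_mul
      (by fun_prop)
  have hmid : L / 2 ∈ Icc 0 L := ⟨by linarith, by linarith⟩
  have h0 : (0 : ℝ) ∈ Icc 0 L := ⟨le_rfl, hL⟩
  have hL' : L ∈ Icc 0 L := ⟨hL, le_rfl⟩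
  have hlhs : L / 2 * (∫ z in (0 : ℝ)..L, f z) - ∫ z in (0 : ℝ)..L, z * f z
      = (∫ z in (0 : ℝ)..L / 2, (L / 2 - z) * f z) + ∫ z in L / 2..L, (L / 2 - z) * f z := by
    rw [intervalIntegral.integral_add_adjacent_intervals (hgint _ _ h0 hmid) (hgint _ _ hmid hL'),
      ← intervalIntegral.integral_const_mul, ← intervalIntegral.integral_sub
        (hfint.const_mul _) (hfint.continuousOn_mul (continuousOn_id' _))]
    exact intervalIntegral.integral_congr fun z _ => by ring
  -- left of the midpoint the weight is nonnegative and `f ≤ f 0`, right of it the weight is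
  -- nonpositive and `f L ≤ f`
  have hleft : ∫ z in (0 : ℝ)..L / 2, (L / 2 - z) * f z
      ≤ ∫ z in (0 : ℝ)..L / 2, (L / 2 - z) * f 0 := by
    refine intervalIntegral.integral_mono_on (by linarith) (hgint _ _ h0 hmid)
      ((by fun_prop : Continuous fun z : ℝ => (L / 2 - z) * f 0).intervalIntegrable _ _)
      fun z hz => mul_le_mul_of_nonneg_left ?_ (by linarith [hz.2])
    exact hf h0 ⟨hz.1, by linarith [hz.2]⟩ hz.1
  have hright : ∫ z in L / 2..L, (L / 2 - z) * f z ≤ ∫ z in L / 2..L, (L / 2 - z) * f L := by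
    refine intervalIntegral.integral_mono_on (by linarith) (hgint _ _ hmid hL')
      ((by fun_prop : Continuous fun z : ℝ => (L / 2 - z) * f L).intervalIntegrable _ _)
      fun z hz => mul_le_mul_of_nonpos_left ?_ (by linarith [hz.1])
    exact hf ⟨by linarith [hz.1], hz.2⟩ hL' hz.2
  have hcalc : (∫ z in (0 : ℝ)..L / 2, (L / 2 - z) * f 0) + ∫ z in L / 2..L, (L / 2 - z) * f L
      = (f 0 - f L) * L ^ 2 / 8 := by
    simp only [intervalIntegral.integral_mul_const, intervalIntegral.integral_sub
      intervalIntegrable_const intervalIntegral.intervalIntegrable_id, integral_id,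
      intervalIntegral.integral_const, smul_eq_mul]
    ring
  linarith

theorem isClosed_setOf_antitoneOn_inter {α β γ : Type*} [TopologicalSpace α] [Preorder β]
    [TopologicalSpace γ] [Preorder γ] [OrderClosedTopology γ] {f : α → β → γ} {I : Set β}
    {T : Set α} (hT : IsClosed T) (hf : ∀ z ∈ I, ContinuousOn (f · z) T) :
    IsClosed ({t | AntitoneOn (f t) I} ∩ T) := by
  refine isClosed_of_closure_subset fun t ht => ?_
  have htT : t ∈ T := hT.closure_subset (closure_mono inter_subset_right ht)
  refine ⟨fun x hx y hy hxy => ?_, htT⟩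
  exact ContinuousWithinAt.closure_le ht ((hf y hy t htT).mono inter_subset_right)
    ((hf x hx t htT).mono inter_subset_right) fun s hs => hs.1 hx hy hxy

structure IsBoundaryKellerSegelSolution (L : ℝ) (n nt nz nzz : ℝ → ℝ → ℝ) : Prop where
  pos : ∀ t z, 0 ≤ t → z ∈ Icc 0 L → 0 < n t z
  continuousOn : ContinuousOn (uncurry n) (Ici 0 ×ˢ Icc 0 L)
  continuousOn_dt : ContinuousOn (uncurry nt) (Ici 0 ×ˢ Icc 0 L)
  continuousOn_dzz : ContinuousOn (uncurry nzz) (Ici 0 ×ˢ Icc 0 L)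
  hasDerivAt_dt : ∀ t z, 0 ≤ t → z ∈ Icc 0 L → HasDerivAt (n · z) (nt t z) t
  hasDerivAt_dz : ∀ t z, 0 ≤ t → z ∈ Icc 0 L → HasDerivAt (n t) (nz t z) z
  hasDerivAt_dzz : ∀ t z, 0 ≤ t → z ∈ Icc 0 L → HasDerivAt (nz t) (nzz t z) z
  pde : ∀ t z, 0 < t → z ∈ Ioo 0 L → nt t z = nzz t z + (n t 0 - n t L) * nz t z
  flux_left : ∀ t, 0 ≤ t → nz t 0 + (n t 0 - n t L) * n t 0 = 0
  flux_right : ∀ t, 0 ≤ t → nz t L + (n t 0 - n t L) * n t L = 0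

namespace IsBoundaryKellerSegelSolution

variable {L : ℝ} {n nt nz nzz : ℝ → ℝ → ℝ}

theorem continuousOn_mass (hn : IsBoundaryKellerSegelSolution L n nt nz nzz) (hL : 0 ≤ L) :
    ContinuousOn (fun t => ∫ z in (0 : ℝ)..L, n t z) (Ici 0) :=
  continuousOn_intervalIntegral_of_continuousOn_prod isClosed_Ici hL hn.continuousOn

theorem continuousOn_moment (hn : IsBoundaryKellerSegelSolution L n nt nz nzz) (hL : 0 ≤ L) :
    ContinuousOn (fun t => ∫ z in (0 : ℝ)..L, z * n t z) (Ici 0) :=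
  continuousOn_intervalIntegral_of_continuousOn_prod (F := fun t z => z * n t z) isClosed_Ici hL
    (continuous_snd.continuousOn.mul hn.continuousOn)

theorem hasDerivAt_mass (hn : IsBoundaryKellerSegelSolution L n nt nz nzz) (hL : 0 ≤ L) {t : ℝ}
    (ht : 0 < t) : HasDerivAt (fun s => ∫ z in (0 : ℝ)..L, n s z) 0 t := by
  have h := hasDerivAt_intervalIntegral_of_continuousOn_prod hL isOpen_Ioi ht
    (fun s hs => hn.continuousOn.uncurry_left s (le_of_lt hs))
    (hn.continuousOn_dt.mono (prod_mono Ioi_subset_Ici_self subset_rfl))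
    (fun s hs z hz => hn.hasDerivAt_dt s z (le_of_lt hs) hz)
  rwa [intervalIntegral.integral_congr_Ioo_of_le hL fun z hz => hn.pde t z ht hz,
    integral_add_mul_eq_zero_of_zero_flux hL (hn.hasDerivAt_dz t · ht.le)
      (hn.hasDerivAt_dzz t · ht.le) (hn.continuousOn_dzz.uncurry_left t ht.le)
      (hn.flux_left t ht.le) (hn.flux_right t ht.le)] at h

theorem hasDerivAt_moment (hn : IsBoundaryKellerSegelSolution L n nt nz nzz) (hL : 0 ≤ L) {t : ℝ}
    (ht : 0 < t) : HasDerivAt (fun s => ∫ z in (0 : ℝ)..L, z * n s z)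
      ((n t 0 - n t L) * (1 - ∫ z in (0 : ℝ)..L, n t z)) t := by
  have h := hasDerivAt_intervalIntegral_of_continuousOn_prod (F := fun s z => z * n s z)
    (F' := fun s z => z * nt s z) hL isOpen_Ioi ht
    (fun s hs => continuousOn_id.mul (hn.continuousOn.uncurry_left s (le_of_lt hs)))
    (continuous_snd.continuousOn.mul
      (hn.continuousOn_dt.mono (prod_mono Ioi_subset_Ici_self subset_rfl)))
    (fun s hs z hz => (hn.hasDerivAt_dt s z (le_of_lt hs) hz).const_mul z)
  rw [intervalIntegral.integral_congr_Ioo_of_le hL fun z hz => by rw [hn.pde t z ht hz],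
    integral_mul_add_mul_of_zero_flux hL (hn.hasDerivAt_dz t · ht.le)
      (hn.hasDerivAt_dzz t · ht.le) (hn.continuousOn_dzz.uncurry_left t ht.le)
      (hn.flux_left t ht.le) (hn.flux_right t ht.le)] at h
  exact h.congr_deriv (by ring)

theorem mass_eq (hn : IsBoundaryKellerSegelSolution L n nt nz nzz) (hL : 0 ≤ L) {t : ℝ}
    (ht : 0 ≤ t) : ∫ z in (0 : ℝ)..L, n t z = ∫ z in (0 : ℝ)..L, n 0 z := by
  rcases ht.eq_or_lt with rfl | ht
  · rfl
  obtain ⟨ξ, hξ, hslope⟩ := exists_hasDerivAt_eq_slope _ _ ht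
    ((hn.continuousOn_mass hL).mono Icc_subset_Ici_self) fun s hs => hn.hasDerivAt_mass hL hs.1
  rw [eq_comm, div_eq_zero_iff, sub_eq_zero] at hslope
  exact hslope.resolve_right (sub_ne_zero.2 ht.ne')

theorem moment_add_le (hn : IsBoundaryKellerSegelSolution L n nt nz nzz) (hL : 0 ≤ L)
    (hM : 1 ≤ ∫ z in (0 : ℝ)..L, n 0 z) {β t₀ t₁ : ℝ} (ht₀ : 0 ≤ t₀) (ht : t₀ ≤ t₁)
    (hb : ∀ t ∈ Ioo t₀ t₁, β ≤ n t 0 - n t L) :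
    (∫ z in (0 : ℝ)..L, z * n t₁ z) + ((∫ z in (0 : ℝ)..L, n 0 z) - 1) * β * (t₁ - t₀)
      ≤ ∫ z in (0 : ℝ)..L, z * n t₀ z := by
  rcases ht.eq_or_lt with rfl | ht
  · simp
  obtain ⟨ξ, hξ, hslope⟩ := exists_hasDerivAt_eq_slope _ _ ht
    ((hn.continuousOn_moment hL).mono fun s hs => ht₀.trans hs.1)
    fun s hs => hn.hasDerivAt_moment hL (ht₀.trans_lt hs.1)
  rw [hn.mass_eq hL (ht₀.trans hξ.1.le), eq_div_iff (sub_pos.2 ht).ne'] at hslope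
  have := mul_le_mul_of_nonneg_right (mul_le_mul_of_nonpos_right (hb ξ hξ) (sub_nonpos.2 hM))
    (sub_pos.2 ht).le
  linarith

theorem dt_le_of_isMinOn_of_isMaxOn (hn : IsBoundaryKellerSegelSolution L n nt nz nzz)
    {s x y : ℝ} (hs : 0 < s) (hb : 0 < n s 0 - n s L) (hx : 0 ≤ x) (hxy : x < y) (hy : y ≤ L)
    (hmin : IsMinOn (n s) (Icc 0 y) x) (hmax : IsMaxOn (n s) (Icc x L) y) :
    nt s y ≤ nt s x := by
  have hL : 0 < L := (hx.trans_lt hxy).trans_le hy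
  -- at an endpoint, the sign of `∂_z n` contradicts the zero-flux condition
  rcases hx.eq_or_lt with rfl | hx
  · have := (hn.hasDerivAt_dz s 0 hs.le ⟨le_rfl, hL.le⟩).nonneg_of_isMinOn_Icc_left hxy hmin
    nlinarith [hn.flux_left s hs.le, hn.pos s 0 hs.le ⟨le_rfl, hL.le⟩]
  rcases hy.eq_or_lt with rfl | hy
  · have := (hn.hasDerivAt_dz s y hs.le ⟨hL.le, le_rfl⟩).nonneg_of_isMaxOn_Icc_right hxy hmax
    nlinarith [hn.flux_right s hs.le, hn.pos s y hs.le ⟨hL.le, le_rfl⟩]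
  have hderiv : ∀ z ∈ Ioo 0 L, ∀ᶠ w in 𝓝 z, HasDerivAt (n s) (nz s w) w := fun z hz =>
    eventually_of_mem (Icc_mem_nhds hz.1 hz.2) fun w hw => hn.hasDerivAt_dz s w hs.le hw
  have hxI : x ∈ Ioo 0 L := ⟨hx, hxy.trans hy⟩
  have hyI : y ∈ Ioo 0 L := ⟨hx.trans hxy, hy⟩
  have hlocmin : IsLocalMin (n s) x := hmin.isLocalMin (Icc_mem_nhds hx hxy)
  have hlocmax : IsLocalMax (n s) y := hmax.isLocalMax (Icc_mem_nhds hxy hy)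
  have hzx := hlocmin.hasDerivAt_eq_zero (hderiv x hxI).self_of_nhds
  have hzy := hlocmax.hasDerivAt_eq_zero (hderiv y hyI).self_of_nhds
  have hzzx : 0 ≤ nzz s x := hlocmin.nonneg_of_hasDerivAt_of_hasDerivAt (hderiv x hxI)
    (hn.hasDerivAt_dzz s x hs.le (Ioo_subset_Icc_self hxI))
  have hzzy : 0 ≤ -nzz s y := hlocmax.neg.nonneg_of_hasDerivAt_of_hasDerivAt
    ((hderiv y hyI).mono fun w hw => hw.neg)
    (hn.hasDerivAt_dzz s y hs.le (Ioo_subset_Icc_self hyI)).neg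
  rw [hn.pde s x hs hxI, hn.pde s y hs hyI, hzx, hzy]
  linarith

theorem sub_le_mul_of_flux_pos (hn : IsBoundaryKellerSegelSolution L n nt nz nzz)
    {t₀ t₁ ε : ℝ} (ht₀ : 0 ≤ t₀) (hb : ∀ t ∈ Icc t₀ t₁, 0 < n t 0 - n t L)
    (h₀ : AntitoneOn (n t₀) (Icc 0 L)) (hε : 0 < ε) :
    ∀ t ∈ Icc t₀ t₁, ∀ x ∈ Icc 0 L, ∀ y ∈ Icc 0 L, x ≤ y → n t y - n t x ≤ ε * (t - t₀) := by
  by_contra! ⟨t, ht, x, hx, y, hy, hxy, hpos⟩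
  -- the penalty `ε (t - t₀)` makes the time derivative at a maximum of `D` strictly positive
  set P : Set (ℝ × ℝ × ℝ) := Icc t₀ t₁ ×ˢ ((Icc 0 L ×ˢ Icc 0 L) ∩ {p | p.1 ≤ p.2})
  set D : ℝ × ℝ × ℝ → ℝ := fun p => n p.1 p.2.2 - n p.1 p.2.1 - ε * (p.1 - t₀)
  have hP : IsCompact P := isCompact_Icc.prod ((isCompact_Icc.prod isCompact_Icc).inter_right
    (isClosed_le continuous_fst continuous_snd))
  have hD : ContinuousOn D P := by
    have hcont := hn.continuousOn
    refine ((hcont.comp (f := fun p : ℝ × ℝ × ℝ => (p.1, p.2.2)) (by fun_prop) ?_).sub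
      (hcont.comp (f := fun p : ℝ × ℝ × ℝ => (p.1, p.2.1)) (by fun_prop) ?_)).sub (by fun_prop)
    · exact fun p hp => ⟨ht₀.trans hp.1.1, hp.2.1.2⟩
    · exact fun p hp => ⟨ht₀.trans hp.1.1, hp.2.1.1⟩
  have htxy : (t, x, y) ∈ P := ⟨ht, ⟨hx, hy⟩, hxy⟩
  obtain ⟨⟨s, x', y'⟩, ⟨hs, ⟨hx', hy'⟩, hxy'⟩, hmax⟩ := hP.exists_isMaxOn ⟨_, htxy⟩ hD
  have hDpos : 0 < D (s, x', y') := (sub_pos.2 hpos).trans_le (hmax htxy)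
  have hst₀ : t₀ < s := by
    refine hs.1.lt_of_ne fun h => ?_
    subst h
    have := h₀ hx' hy' hxy'
    simp only [D, sub_self, mul_zero, sub_zero] at hDpos
    linarith
  have hxy'' : x' < y' := by
    refine hxy'.lt_of_ne fun h => ?_
    subst h
    simp only [D, sub_self, zero_sub, neg_pos] at hDpos
    nlinarith
  have hmin : IsMinOn (n s) (Icc 0 y') x' := fun w hw => by
    have : D (s, w, y') ≤ D (s, x', y') := hmax ⟨hs, ⟨⟨hw.1, hw.2.trans hy'.2⟩, hy'⟩, hw.2⟩
    exact show n s x' ≤ n s w by linarith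
  have hmax' : IsMaxOn (n s) (Icc x' L) y' := fun w hw => by
    have : D (s, x', w) ≤ D (s, x', y') := hmax ⟨hs, ⟨hx', ⟨hx'.1.trans hw.1, hw.2⟩⟩, hw.1⟩
    exact show n s w ≤ n s y' by linarith
  have htime : 0 ≤ nt s y' - nt s x' - ε := by
    refine HasDerivAt.nonneg_of_isMaxOn_Icc_right (f := fun τ => D (τ, x', y')) hst₀ ?_
      fun τ hτ => hmax ⟨⟨hτ.1, hτ.2.trans hs.2⟩, ⟨⟨hx', hy'⟩, hxy'⟩⟩
    have hs0 : 0 ≤ s := ht₀.trans hs.1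
    exact (((hn.hasDerivAt_dt s y' hs0 hy').sub (hn.hasDerivAt_dt s x' hs0 hx')).sub
      (((hasDerivAt_id' s).sub_const t₀).const_mul ε)).congr_deriv (by ring)
  have := hn.dt_le_of_isMinOn_of_isMaxOn (ht₀.trans_lt hst₀) (hb s hs) hx'.1 hxy'' hy'.2 hmin hmax'
  linarith

theorem antitoneOn_of_flux_pos (hn : IsBoundaryKellerSegelSolution L n nt nz nzz)
    {t₀ t₁ : ℝ} (ht₀ : 0 ≤ t₀) (hb : ∀ t ∈ Icc t₀ t₁, 0 < n t 0 - n t L)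
    (h₀ : AntitoneOn (n t₀) (Icc 0 L)) {t : ℝ} (ht : t ∈ Icc t₀ t₁) :
    AntitoneOn (n t) (Icc 0 L) := by
  intro x hx y hy hxy
  refine sub_nonpos.1 (le_of_forall_pos_le_add fun δ hδ => ?_)
  have hpos : 0 < t - t₀ + 1 := by linarith [ht.1]
  calc n t y - n t x ≤ δ / (t - t₀ + 1) * (t - t₀) :=
        hn.sub_le_mul_of_flux_pos ht₀ hb h₀ (div_pos hδ hpos) t ht x hx y hy hxy
    _ ≤ 0 + δ := by
        rw [zero_add, div_mul_eq_mul_div, div_le_iff₀ hpos]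
        nlinarith

theorem moment_nonneg (hn : IsBoundaryKellerSegelSolution L n nt nz nzz) (hL : 0 ≤ L) {t : ℝ}
    (ht : 0 ≤ t) : 0 ≤ ∫ z in (0 : ℝ)..L, z * n t z :=
  intervalIntegral.integral_nonneg hL fun z hz => mul_nonneg hz.1 (hn.pos t z ht hz).le

theorem half_mul_mass_sub_moment_le (hn : IsBoundaryKellerSegelSolution L n nt nz nzz)
    (hL : 0 ≤ L) (hM : 1 ≤ ∫ z in (0 : ℝ)..L, n 0 z) {t : ℝ} (ht : 0 ≤ t)
    (hanti : ∀ s ∈ Icc 0 t, AntitoneOn (n s) (Icc 0 L)) :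
    L / 2 * (∫ z in (0 : ℝ)..L, n 0 z) - ∫ z in (0 : ℝ)..L, z * n 0 z
      ≤ (n t 0 - n t L) * L ^ 2 / 8 := by
  have hmoment := hn.moment_add_le hL hM le_rfl ht (β := 0) fun s hs =>
    sub_nonneg.2 (hanti s (Ioo_subset_Icc_self hs) ⟨le_rfl, hL⟩ ⟨hL, le_rfl⟩ hL)
  have hsymm := (hanti t ⟨ht, le_rfl⟩).half_mul_integral_sub_integral_mul_le hL
  rw [hn.mass_eq hL ht] at hsymm
  simp only [mul_zero, zero_mul, add_zero] at hmoment
  linarith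

theorem antitoneOn_of_antitoneOn_zero (hn : IsBoundaryKellerSegelSolution L n nt nz nzz)
    (hL : 0 < L) (h₀ : AntitoneOn (n 0) (Icc 0 L)) (hM : 1 ≤ ∫ z in (0 : ℝ)..L, n 0 z)
    (hmom : 2 * ∫ z in (0 : ℝ)..L, z * n 0 z < L * ∫ z in (0 : ℝ)..L, n 0 z) {T : ℝ}
    (hT : 0 ≤ T) : AntitoneOn (n T) (Icc 0 L) := by
  suffices Icc 0 T ⊆ {t | AntitoneOn (n t) (Icc 0 L)} from this ⟨hT, le_rfl⟩
  refine IsClosed.Icc_subset_of_forall_mem_nhdsGT_of_Icc_subset ?_ h₀ fun t ht hanti => ?_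
  · exact isClosed_setOf_antitoneOn_inter isClosed_Icc fun z hz =>
      (hn.continuousOn.uncurry_right z hz).mono Icc_subset_Ici_self
  have hflux : 0 < n t 0 - n t L := by
    have := hn.half_mul_mass_sub_moment_le hL.le hM ht.1 hanti
    nlinarith [pow_pos hL 2]
  have hcont : ContinuousWithinAt (fun s => n s 0 - n s L) (Ici t) t :=
    (((hn.continuousOn.uncurry_right 0 (left_mem_Icc.2 hL.le)).sub
      (hn.continuousOn.uncurry_right L (right_mem_Icc.2 hL.le))) t ht.1).mono
      (Ici_subset_Ici.2 ht.1)
  obtain ⟨u, htu, hu⟩ := mem_nhdsGE_iff_exists_Icc_subset.mp (hcont (Ioi_mem_nhds hflux))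
  exact mem_of_superset (Ico_mem_nhdsGT htu) fun s hs =>
    hn.antitoneOn_of_flux_pos ht.1 hu (hanti ⟨ht.1, le_rfl⟩) (Ico_subset_Icc_self hs)

end IsBoundaryKellerSegelSolution

theorem blowup_finite_interval_general
    (L : ℝ) (hL : 0 < L)
    (n nt nz nzz : ℝ → ℝ → ℝ)
    (hpos : ∀ t z : ℝ, 0 ≤ t → z ∈ Icc 0 L → 0 < n t z)
    -- regularity (C^{1,2}): continuity of n and of its derivatives
    (hcont : ContinuousOn (fun p : ℝ × ℝ => n p.1 p.2) (Ici (0:ℝ) ×ˢ Icc 0 L))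
    (hcont_t : ContinuousOn (fun p : ℝ × ℝ => nt p.1 p.2) (Ici (0:ℝ) ×ˢ Icc 0 L))
    (hcont_zz : ContinuousOn (fun p : ℝ × ℝ => nzz p.1 p.2) (Ici (0:ℝ) ×ˢ Icc 0 L))
    (hdt : ∀ t z : ℝ, 0 ≤ t → z ∈ Icc 0 L → HasDerivAt (fun s => n s z) (nt t z) t)
    (hdz : ∀ t z : ℝ, 0 ≤ t → z ∈ Icc 0 L → HasDerivAt (fun w => n t w) (nz t z) z)
    (hdzz : ∀ t z : ℝ, 0 ≤ t → z ∈ Icc 0 L → HasDerivAt (fun w => nz t w) (nzz t z) z)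
    -- the equation on the finite interval
    (hpde : ∀ t z : ℝ, 0 < t → z ∈ Ioo 0 L →
      nt t z = nzz t z + (n t 0 - n t L) * nz t z)
    -- zero-flux boundary conditions at both endpoints
    (hbc0 : ∀ t : ℝ, 0 ≤ t → nz t 0 + (n t 0 - n t L) * n t 0 = 0)
    (hbcL : ∀ t : ℝ, 0 ≤ t → nz t L + (n t 0 - n t L) * n t L = 0)
    -- non-increasing initial profile
    (hmono : AntitoneOn (fun z => n 0 z) (Icc 0 L))
    -- super-critical mass
    (hM : 1 < ∫ z in (0:ℝ)..L, n 0 z)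
    -- small first moment: 4 ∫ z n₀ < L M
    (hmom : 4 * ∫ z in (0:ℝ)..L, z * n 0 z < L * ∫ z in (0:ℝ)..L, n 0 z) :
    False := by
  have hn : IsBoundaryKellerSegelSolution L n nt nz nzz :=
    ⟨hpos, hcont, hcont_t, hcont_zz, hdt, hdz, hdzz, hpde, hbc0, hbcL⟩
  set M := ∫ z in (0 : ℝ)..L, n 0 z
  set J₀ := ∫ z in (0 : ℝ)..L, z * n 0 z
  have hJ₀ : 0 ≤ J₀ := hn.moment_nonneg hL.le le_rfl
  have hanti := fun t (ht : 0 ≤ t) => hn.antitoneOn_of_antitoneOn_zero hL hmono hM.le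
    (by linarith) ht
  set β := 8 * (L / 2 * M - J₀) / L ^ 2
  have hβ : 0 < β := div_pos (by nlinarith) (by positivity)
  have hflux : ∀ t, 0 ≤ t → β ≤ n t 0 - n t L := fun t ht => by
    have := hn.half_mul_mass_sub_moment_le hL.le hM.le ht fun s hs => hanti s hs.1
    rw [div_le_iff₀ (by positivity)]
    linarith
  have hrate : 0 < (M - 1) * β := mul_pos (sub_pos.2 hM) hβ
  set T := (J₀ + 1) / ((M - 1) * β)
  have hT : 0 < T := div_pos (by linarith) hrate
  have hdecay : (∫ z in (0 : ℝ)..L, z * n T z) + (M - 1) * β * T ≤ J₀ := by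
    simpa only [sub_zero] using
      hn.moment_add_le hL.le hM.le le_rfl hT.le fun t ht => hflux t ht.1.le
  have hTβ : (M - 1) * β * T = J₀ + 1 := mul_div_cancel₀ _ hrate.ne'
  linarith [hn.moment_nonneg hL.le hT.le]

/-- Blow-up on a finite interval (Proposition 5): there is no positive classical
solution of the boundary Keller–Segel equation on `[0,∞) × [0,L]` with
non-increasing initial profile, super-critical mass `M > 1` and small first
moment `4 ∫ z n₀ < L M`. -/
theorem blowup_finite_interval
    (L : ℝ) (hL : 0 < L)
    (n nt nz nzz : ℝ → ℝ → ℝ)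
    (hpos : ∀ t z : ℝ, 0 ≤ t → z ∈ Icc 0 L → 0 < n t z)
    -- regularity (C^{1,2}): continuity of n and of its derivatives
    (hcont : ContinuousOn (fun p : ℝ × ℝ => n p.1 p.2) (Ici (0:ℝ) ×ˢ Icc 0 L))
    (hcont_t : ContinuousOn (fun p : ℝ × ℝ => nt p.1 p.2) (Ici (0:ℝ) ×ˢ Icc 0 L))
    (hcont_z : ContinuousOn (fun p : ℝ × ℝ => nz p.1 p.2) (Ici (0:ℝ) ×ˢ Icc 0 L))
    (hcont_zz : ContinuousOn (fun p : ℝ × ℝ => nzz p.1 p.2) (Ici (0:ℝ) ×ˢ Icc 0 L))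
    (hdt : ∀ t z : ℝ, 0 ≤ t → z ∈ Icc 0 L → HasDerivAt (fun s => n s z) (nt t z) t)
    (hdz : ∀ t z : ℝ, 0 ≤ t → z ∈ Icc 0 L → HasDerivAt (fun w => n t w) (nz t z) z)
    (hdzz : ∀ t z : ℝ, 0 ≤ t → z ∈ Icc 0 L → HasDerivAt (fun w => nz t w) (nzz t z) z)
    -- the equation on the finite interval
    (hpde : ∀ t z : ℝ, 0 < t → z ∈ Ioo 0 L →
      nt t z = nzz t z + (n t 0 - n t L) * nz t z)
    -- zero-flux boundary conditions at both endpoints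
    (hbc0 : ∀ t : ℝ, 0 ≤ t → nz t 0 + (n t 0 - n t L) * n t 0 = 0)
    (hbcL : ∀ t : ℝ, 0 ≤ t → nz t L + (n t 0 - n t L) * n t L = 0)
    -- non-increasing initial profile
    (hmono : AntitoneOn (fun z => n 0 z) (Icc 0 L))
    -- super-critical mass
    (hM : 1 < ∫ z in (0:ℝ)..L, n 0 z)
    -- small first moment: 4 ∫ z n₀ < L M
    (hmom : 4 * ∫ z in (0:ℝ)..L, z * n 0 z < L * ∫ z in (0:ℝ)..L, n 0 z) :
    False :=
  blowup_finite_interval_general L hL n nt nz nzz hpos hcont hcont_t hcont_zz hdt hdz hdzz hpde hbc0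
    hbcL hmono hM hmom
end

section
/- Carleman-type entropy lower bound (Lemma 2): Let f : (0,∞) → [0,∞) be measurable with ∫₀^∞ (1+z) f(z) dz < ∞ and ∫₀^∞ f(z)(log f(z))₊ dz < ∞. Then f log f is integrable on (0,∞), and for every α > 0: ∫₀^∞ f(z)(log f(z))₊ dz ≤ ∫₀^∞ f(z) log f(z) dz + α ∫₀^∞ z f(z) dz + 1/(α e). -/
open MeasureTheory Set Filter

/-- log v ≤ v / e for v > 0. -/
lemma log_le_div_e {v : ℝ} (hv : 0 < v) : Real.log v ≤ v * Real.exp (-1) := by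
  have h := Real.log_le_sub_one_of_pos (mul_pos hv (Real.exp_pos (-1)))
  rw [Real.log_mul hv.ne' (Real.exp_pos _).ne', Real.log_exp] at h
  have he : Real.exp (-1) ≤ 1 := by
    rw [Real.exp_le_one_iff]; norm_num
  nlinarith [Real.exp_pos (-1)]

/-- Key pointwise bound: for `t ≥ 0`, `s ≥ 0`,
`t * max (-log t) 0 ≤ t * s + exp (-s - 1)`. -/
lemma key_bound {t s : ℝ} (ht : 0 ≤ t) (hs : 0 ≤ s) :
    t * max (-Real.log t) 0 ≤ t * s + Real.exp (-s - 1) := by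
  rcases eq_or_lt_of_le ht with h | h
  · rw [← h]
    simpa using (Real.exp_pos (-s - 1)).le
  have hts : 0 ≤ t * s := mul_nonneg ht hs
  have hexp : 0 < Real.exp (-s - 1) := Real.exp_pos _
  rcases le_or_gt (-Real.log t) 0 with h0 | h0
  · rw [max_eq_right h0, mul_zero]; positivity
  rw [max_eq_left h0.le]
  -- t * (-log t) - t * s = t * log (exp (-s) / t) ≤ exp(-s) * exp(-1)
  have hv : (0:ℝ) < Real.exp (-s) / t := by positivity
  have hlog : Real.log (Real.exp (-s) / t) = -s - Real.log t := by
    rw [Real.log_div (Real.exp_pos _).ne' h.ne', Real.log_exp]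
  have h1 : t * Real.log (Real.exp (-s) / t) ≤ t * ((Real.exp (-s) / t) * Real.exp (-1)) :=
    mul_le_mul_of_nonneg_left (log_le_div_e hv) ht
  rw [hlog] at h1
  have h2 : t * ((Real.exp (-s) / t) * Real.exp (-1)) = Real.exp (-s - 1) := by
    field_simp
    rw [← Real.exp_add]
    ring_nf
  rw [h2] at h1
  nlinarith

/-- Carleman-type entropy lower bound (Lemma 2): if `f ≥ 0` with
`∫ (1+z) f < ∞` and `∫ f (log f)₊ < ∞`, then `f log f` is integrable and for
every `α > 0`, `∫ f (log f)₊ ≤ ∫ f log f + α ∫ z f + 1/(α e)`.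
(Here `Real.log 0 = 0`, so the convention `0 · log 0 = 0` is automatic.) -/
theorem carleman_entropy_bound
    (f : ℝ → ℝ) (hmeas : Measurable f)
    (hnonneg : ∀ z : ℝ, 0 < z → 0 ≤ f z)
    (hint : IntegrableOn (fun z => (1 + z) * f z) (Ioi 0))
    (hentplus : IntegrableOn (fun z => f z * max (Real.log (f z)) 0) (Ioi 0)) :
    IntegrableOn (fun z => f z * Real.log (f z)) (Ioi 0) ∧
      ∀ α : ℝ, 0 < α →
        (∫ z in Ioi (0:ℝ), f z * max (Real.log (f z)) 0)
          ≤ (∫ z in Ioi (0:ℝ), f z * Real.log (f z))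
            + α * (∫ z in Ioi (0:ℝ), z * f z) + 1 / (α * Real.exp 1) := by
  -- integrability of z * f z
  have hzf : IntegrableOn (fun z => z * f z) (Ioi 0) := by
    refine hint.mono' ((measurable_id.mul hmeas).aestronglyMeasurable) ?_
    filter_upwards [ae_restrict_mem measurableSet_Ioi] with z hz
    have hz' : (0:ℝ) < z := hz
    have hf := hnonneg z hz'
    rw [Real.norm_eq_abs, abs_of_nonneg (mul_nonneg hz'.le hf)]
    nlinarith
  -- integrability of exp(-α z - 1) on Ioi 0, and its value
  have hexpint : ∀ α : ℝ, 0 < α →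
      IntegrableOn (fun z => Real.exp (-(α * z) - 1)) (Ioi 0) := by
    intro α hα
    have := (exp_neg_integrableOn_Ioi 0 hα).mul_const (Real.exp (-1))
    refine this.congr (Eventually.of_forall fun x => ?_)
    show Real.exp (-α * x) * Real.exp (-1) = Real.exp (-(α * x) - 1)
    rw [← Real.exp_add]
    ring_nf
  -- the negative part is dominated
  have hnegdom : ∀ α : ℝ, 0 < α → ∀ z ∈ Ioi (0:ℝ),
      f z * max (-Real.log (f z)) 0 ≤ α * z * f z + Real.exp (-(α * z) - 1) := by
    intro α hα z hz
    have hz' : (0:ℝ) < z := hz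
    have := key_bound (hnonneg z hz') (le_of_lt (mul_pos hα hz') : (0:ℝ) ≤ α * z)
    calc f z * max (-Real.log (f z)) 0 ≤ f z * (α * z) + Real.exp (-(α * z) - 1) := this
      _ = α * z * f z + Real.exp (-(α * z) - 1) := by ring
  have hnegint : ∀ α : ℝ, 0 < α →
      IntegrableOn (fun z => f z * max (-Real.log (f z)) 0) (Ioi 0) := by
    intro α hα
    have hg : IntegrableOn (fun z => α * z * f z + Real.exp (-(α * z) - 1)) (Ioi 0) :=
      ((hzf.const_mul α).congr (Eventually.of_forall fun x => by ring)).add (hexpint α hα)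
    refine hg.mono' ?_ ?_
    · exact (hmeas.mul ((hmeas.log.neg).max measurable_const)).aestronglyMeasurable
    · filter_upwards [ae_restrict_mem measurableSet_Ioi] with z hz
      have hz' : (0:ℝ) < z := hz
      rw [Real.norm_eq_abs, abs_of_nonneg (mul_nonneg (hnonneg z hz') (le_max_right _ _))]
      exact hnegdom α hα z hz
  -- f log f = f (log f)₊ - f (-log f)₊
  have hsplit : ∀ z : ℝ, f z * Real.log (f z)
      = f z * max (Real.log (f z)) 0 - f z * max (-Real.log (f z)) 0 := by
    intro z
    rcases le_or_gt (Real.log (f z)) 0 with h | h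
    · rw [max_eq_right h, max_eq_left (by linarith)]; ring
    · rw [max_eq_left h.le, max_eq_right (by linarith)]; ring
  have hflog : IntegrableOn (fun z => f z * Real.log (f z)) (Ioi 0) := by
    have := hentplus.sub (hnegint 1 one_pos)
    exact this.congr (Eventually.of_forall fun z => by simpa using (hsplit z).symm)
  refine ⟨hflog, fun α hα => ?_⟩
  -- compute ∫ exp(-αz - 1)
  have hexpval : (∫ z in Ioi (0:ℝ), Real.exp (-(α * z) - 1)) = 1 / (α * Real.exp 1) := by
    have h1 : (∫ z in Ioi (0:ℝ), Real.exp (-(α * z) - 1))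
        = ∫ z in Ioi (0:ℝ), Real.exp (-(α * z)) * Real.exp (-1) := by
      congr 1; ext z; rw [← Real.exp_add]; ring_nf
    rw [h1, MeasureTheory.integral_mul_const,
      show (fun z => Real.exp (-(α * z))) = (fun z => Real.exp (-z)) ∘ (fun z => α * z) from rfl]
    have := integral_comp_mul_left_Ioi (fun x => Real.exp (-x)) 0 hα
    simp only [mul_zero] at this
    rw [show (∫ z in Ioi (0:ℝ), ((fun z => Real.exp (-z)) ∘ fun z => α * z) z)
        = ∫ x in Ioi (0:ℝ), Real.exp (-(α * x)) from rfl, this, integral_exp_neg_Ioi_zero]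
    rw [smul_eq_mul, Real.exp_neg]
    field_simp
  -- integral of negative part bounded
  have hnegle : (∫ z in Ioi (0:ℝ), f z * max (-Real.log (f z)) 0)
      ≤ α * (∫ z in Ioi (0:ℝ), z * f z) + 1 / (α * Real.exp 1) := by
    have hg : IntegrableOn (fun z => α * z * f z + Real.exp (-(α * z) - 1)) (Ioi 0) :=
      ((hzf.const_mul α).congr (Eventually.of_forall fun x => by ring)).add (hexpint α hα)
    have h := setIntegral_mono_on (hnegint α hα) hg measurableSet_Ioi (hnegdom α hα)
    calc (∫ z in Ioi (0:ℝ), f z * max (-Real.log (f z)) 0)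
        ≤ ∫ z in Ioi (0:ℝ), (α * z * f z + Real.exp (-(α * z) - 1)) := h
      _ = (∫ z in Ioi (0:ℝ), α * z * f z) + ∫ z in Ioi (0:ℝ), Real.exp (-(α * z) - 1) :=
          integral_add ((hzf.const_mul α).congr (Eventually.of_forall fun x => by ring))
            (hexpint α hα)
      _ = α * (∫ z in Ioi (0:ℝ), z * f z) + 1 / (α * Real.exp 1) := by
          rw [hexpval]
          congr 1
          rw [← integral_const_mul]
          congr 1; ext z; ring
  -- conclude
  have hid : (∫ z in Ioi (0:ℝ), f z * max (Real.log (f z)) 0)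
      = (∫ z in Ioi (0:ℝ), f z * Real.log (f z))
        + ∫ z in Ioi (0:ℝ), f z * max (-Real.log (f z)) 0 := by
    rw [← integral_add hflog (hnegint α hα)]
    apply setIntegral_congr_fun measurableSet_Ioi
    intro z _
    have := hsplit z
    simp only; linarith
  linarith [hnegle, hid.le, hid.ge]
end

section
/- Weighted trace inequality with entropy weight: Define Λ : [0,∞) → [0,∞) by Λ(u) = ∫₀^u √(max(log s, 0)) ds (so Λ(0)=0 and Λ'(u) = (log u)₊^{1/2}). Let n : [0,∞) → (0,∞) be a C¹ function such that n, n(log n)₊ and z ↦ n'(z)²/n(z) are integrable on (0,∞) and n(z) → 0 as z → ∞. Then Λ(n(0))² ≤ (∫₀^∞ n(z)(log n(z))₊ dz) · (∫₀^∞ n'(z)²/n(z) dz). -/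
/-!
Since `Λ(0) = 0` and `n → 0`, the fundamental theorem of calculus gives
`Λ(n 0) = -∫₀^∞ Λ'(n) n'`. Writing `Λ'(n) n' = (√n Λ'(n)) (n' / √n)` and applying Cauchy–Schwarz
bounds `Λ(n 0)²` by `(∫ n Λ'(n)²) (∫ n'² / n)`, and `Λ'(n)² = (log n)₊`.
-/

open MeasureTheory Set Filter

theorem integral_mul_eq_inner_toLp {α : Type*} [MeasurableSpace α] {μ : Measure α} {f g : α → ℝ}
    (hf : MemLp f 2 μ) (hg : MemLp g 2 μ) :
    ∫ a, f a * g a ∂μ = inner ℝ (hf.toLp f) (hg.toLp g) := by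
  rw [L2.inner_def]
  refine integral_congr_ae ?_
  filter_upwards [hf.coeFn_toLp, hg.coeFn_toLp] with a hfa hga
  simp [hfa, hga, mul_comm]

theorem sq_integral_mul_le_integral_sq_mul_integral_sq {α : Type*} [MeasurableSpace α]
    {μ : Measure α} {f g : α → ℝ} (hf : MemLp f 2 μ) (hg : MemLp g 2 μ) :
    (∫ a, f a * g a ∂μ) ^ 2 ≤ (∫ a, f a ^ 2 ∂μ) * ∫ a, g a ^ 2 ∂μ := by
  simp only [sq, integral_mul_eq_inner_toLp hf hg, integral_mul_eq_inner_toLp hf hf,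
    integral_mul_eq_inner_toLp hg hg]
  exact real_inner_mul_inner_self_le _ _

theorem integral_Ioi_comp_mul_deriv_of_tendsto {g n n' : ℝ → ℝ} {a L : ℝ} (hg : Continuous g)
    (hderiv : ∀ z ∈ Ici a, HasDerivAt n (n' z) z)
    (hint : IntegrableOn (fun z => g (n z) * n' z) (Ioi a)) (hlim : Tendsto n atTop (nhds L)) :
    ∫ z in Ioi a, g (n z) * n' z = ∫ s in n a..L, g s := by
  have hprim : ∀ u, HasDerivAt (fun u => ∫ s in (0 : ℝ)..u, g s) (g u) u := fun u =>
    (hg.integral_hasStrictDerivAt 0 u).hasDerivAt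
  rw [integral_Ioi_of_hasDerivAt_of_tendsto' (fun z hz => (hprim (n z)).comp z (hderiv z hz)) hint
    ((hprim L).continuousAt.tendsto.comp hlim)]
  exact intervalIntegral.integral_interval_sub_left (hg.intervalIntegrable _ _)
    (hg.intervalIntegrable _ _)

theorem sq_intervalIntegral_le_mul_integral_sq_deriv_div {g n n' : ℝ → ℝ} (hg : Continuous g)
    (hpos : ∀ z, 0 ≤ z → 0 < n z) (hderiv : ∀ z, 0 ≤ z → HasDerivAt n (n' z) z)
    (hweight : IntegrableOn (fun z => n z * g (n z) ^ 2) (Ioi 0))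
    (hfisher : IntegrableOn (fun z => n' z ^ 2 / n z) (Ioi 0))
    (hlim : Tendsto n atTop (nhds 0)) :
    (∫ s in (0 : ℝ)..n 0, g s) ^ 2
      ≤ (∫ z in Ioi 0, n z * g (n z) ^ 2) * ∫ z in Ioi 0, n' z ^ 2 / n z := by
  have hn : ContinuousOn n (Ioi 0) := fun z hz =>
    (hderiv z (le_of_lt hz)).continuousAt.continuousWithinAt
  have hn' : AEMeasurable n' (volume.restrict (Ioi 0)) :=
    (measurable_deriv n).aemeasurable.congr <|
      (ae_restrict_mem measurableSet_Ioi).mono fun z hz => (hderiv z (le_of_lt hz)).deriv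
  set f₁ : ℝ → ℝ := fun z => n' z / √(n z)
  set f₂ : ℝ → ℝ := fun z => √(n z) * g (n z)
  have hf₁sq : EqOn (fun z => n' z ^ 2 / n z) (fun z => f₁ z ^ 2) (Ioi 0) := fun z hz => by
    simp only [f₁, div_pow, Real.sq_sqrt (hpos z (le_of_lt hz)).le]
  have hf₂sq : EqOn (fun z => n z * g (n z) ^ 2) (fun z => f₂ z ^ 2) (Ioi 0) := fun z hz => by
    simp only [f₂, mul_pow, Real.sq_sqrt (hpos z (le_of_lt hz)).le]
  have hf₁ : MemLp f₁ 2 (volume.restrict (Ioi 0)) :=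
    (memLp_two_iff_integrable_sq (f := f₁)
      (hn'.div (hn.sqrt.aemeasurable measurableSet_Ioi)).aestronglyMeasurable).2 <|
        hfisher.congr_fun hf₁sq measurableSet_Ioi
  have hf₂ : MemLp f₂ 2 (volume.restrict (Ioi 0)) :=
    (memLp_two_iff_integrable_sq
      ((hn.sqrt.mul (hg.comp_continuousOn hn)).aestronglyMeasurable measurableSet_Ioi)).2 <|
        hweight.congr_fun hf₂sq measurableSet_Ioi
  have hprod : EqOn (fun z => f₁ z * f₂ z) (fun z => g (n z) * n' z) (Ioi 0) := fun z hz => by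
    have := Real.sqrt_pos.2 (hpos z (le_of_lt hz))
    simp only [f₁, f₂]
    field_simp
  have hchange : ∫ z in Ioi 0, g (n z) * n' z = -∫ s in (0 : ℝ)..n 0, g s := by
    rw [integral_Ioi_comp_mul_deriv_of_tendsto hg hderiv
      (IntegrableOn.congr_fun (hf₁.integrable_mul hf₂) hprod measurableSet_Ioi) hlim,
      intervalIntegral.integral_symm]
  calc (∫ s in (0 : ℝ)..n 0, g s) ^ 2 = (∫ z in Ioi 0, f₁ z * f₂ z) ^ 2 := by
        rw [setIntegral_congr_fun measurableSet_Ioi hprod, hchange, neg_sq]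
    _ ≤ (∫ z in Ioi 0, f₁ z ^ 2) * ∫ z in Ioi 0, f₂ z ^ 2 :=
        sq_integral_mul_le_integral_sq_mul_integral_sq hf₁ hf₂
    _ = _ := by
        rw [← setIntegral_congr_fun measurableSet_Ioi hf₁sq,
          ← setIntegral_congr_fun measurableSet_Ioi hf₂sq, mul_comm]

theorem weighted_trace_inequality_general
    (n n' : ℝ → ℝ)
    (hpos : ∀ z : ℝ, 0 ≤ z → 0 < n z)
    (hderiv : ∀ z : ℝ, 0 ≤ z → HasDerivAt n (n' z) z)
    (hentplus : IntegrableOn (fun z => n z * max (Real.log (n z)) 0) (Ioi 0))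
    (hfisher : IntegrableOn (fun z => (n' z) ^ 2 / n z) (Ioi 0))
    (hlim : Tendsto n atTop (nhds 0)) :
    (∫ s in (0:ℝ)..(n 0), Real.sqrt (max (Real.log s) 0)) ^ 2
      ≤ (∫ z in Ioi (0:ℝ), n z * max (Real.log (n z)) 0)
          * ∫ z in Ioi (0:ℝ), (n' z) ^ 2 / n z := by
  have hsq (s : ℝ) : √(max (Real.log s) 0) ^ 2 = max (Real.log s) 0 :=
    Real.sq_sqrt (le_max_right _ _)
  have hg : Continuous fun s => √(max (Real.log s) 0) :=
    Real.continuous_posLog.sqrt.congr fun s => by rw [Real.posLog, max_comm]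
  simpa only [hsq] using sq_intervalIntegral_le_mul_integral_sq_deriv_div hg hpos hderiv
    (by simpa only [hsq] using hentplus) hfisher hlim

/-- Weighted trace inequality with entropy weight: with
`Λ(u) = ∫₀^u √((log s)₊) ds`, a positive C¹ function `n` on `[0,∞)` with
`n`, `n (log n)₊` and `n'²/n` integrable and `n → 0` at infinity satisfies
`Λ(n(0))² ≤ (∫ n (log n)₊) · (∫ n'²/n)`. -/
theorem weighted_trace_inequality
    (n n' : ℝ → ℝ)
    (hpos : ∀ z : ℝ, 0 ≤ z → 0 < n z)
    (hderiv : ∀ z : ℝ, 0 ≤ z → HasDerivAt n (n' z) z)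
    (hcont : ContinuousOn n' (Ici 0))
    (hint : IntegrableOn n (Ioi 0))
    (hentplus : IntegrableOn (fun z => n z * max (Real.log (n z)) 0) (Ioi 0))
    (hfisher : IntegrableOn (fun z => (n' z) ^ 2 / n z) (Ioi 0))
    (hlim : Tendsto n atTop (nhds 0)) :
    (∫ s in (0:ℝ)..(n 0), Real.sqrt (max (Real.log s) 0)) ^ 2
      ≤ (∫ z in Ioi (0:ℝ), n z * max (Real.log (n z)) 0)
          * ∫ z in Ioi (0:ℝ), (n' z) ^ 2 / n z :=
  weighted_trace_inequality_general n n' hpos hderiv hentplus hfisher hlim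
end

section
/- Pointwise decay bound at infinity: Let f : [0,∞) → (0,∞) be a C¹ function such that z ↦ z f(z) and z ↦ f'(z)²/f(z) are integrable on (0,∞) and f(z) → 0 as z → ∞. Then for every x > 0: f(x)² ≤ (1/x) · (∫₀^∞ z f(z) dz) · (∫₀^∞ f'(z)²/f(z) dz). -/
/-!
Since `f → 0`, `f x = -∫_x^∞ f'`. Writing `|f'| = (|f'| / √f) · √f`, Cauchy–Schwarz gives
`f x ² ≤ (∫_x^∞ f'² / f) (∫_x^∞ f)`, and `∫_x^∞ f ≤ x⁻¹ ∫_0^∞ z f z` because `1 ≤ z / x` on `(x, ∞)`.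
-/

open MeasureTheory Set Filter Topology

section WeightedCauchySchwarz

variable {α : Type*} [MeasurableSpace α] {μ : Measure α} {g w : α → ℝ}

theorem two_mul_mul_abs_le_sq_mul_sq_div_add {t a b : ℝ} (hb : 0 < b) :
    2 * t * |a| ≤ t ^ 2 * (a ^ 2 / b) + b := by
  rw [mul_div_assoc', div_add' _ _ _ hb.ne', le_div_iff₀ hb]
  nlinarith [sq_nonneg (t * |a| - b), sq_abs a]

theorem integrable_of_integrable_sq_div (hg : AEStronglyMeasurable g μ) (hw : ∀ᵐ a ∂μ, 0 < w a)
    (hgw : Integrable (fun a => g a ^ 2 / w a) μ) (hwi : Integrable w μ) : Integrable g μ := by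
  refine ((hgw.add hwi).const_mul (1 / 2)).mono' hg ?_
  filter_upwards [hw] with a ha
  have := two_mul_mul_abs_le_sq_mul_sq_div_add (t := 1) (a := g a) ha
  simp only [Pi.add_apply, Real.norm_eq_abs]
  linarith

theorem sq_integral_abs_le_integral_sq_div_mul_integral (hg : AEStronglyMeasurable g μ)
    (hw : ∀ᵐ a ∂μ, 0 < w a) (hgw : Integrable (fun a => g a ^ 2 / w a) μ)
    (hwi : Integrable w μ) :
    (∫ a, |g a| ∂μ) ^ 2 ≤ (∫ a, g a ^ 2 / w a ∂μ) * ∫ a, w a ∂μ := by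
  have hgi := (integrable_of_integrable_sq_div hg hw hgw hwi).abs
  -- integrating the pointwise AM-GM bound gives a nonnegative quadratic in `t`
  have hquad : ∀ t : ℝ, 0 ≤ (∫ a, g a ^ 2 / w a ∂μ) * (t * t) + (-2 * ∫ a, |g a| ∂μ) * t
      + ∫ a, w a ∂μ := by
    intro t
    have hmono : ∫ a, 2 * t * |g a| ∂μ ≤ ∫ a, t ^ 2 * (g a ^ 2 / w a) + w a ∂μ :=
      integral_mono_ae (hgi.const_mul _) ((hgw.const_mul _).add hwi)
        (hw.mono fun a ha => two_mul_mul_abs_le_sq_mul_sq_div_add ha)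
    rw [integral_const_mul, integral_add (hgw.const_mul _) hwi, integral_const_mul] at hmono
    nlinarith
  have hdiscrim := discrim_le_zero hquad
  rw [discrim] at hdiscrim
  nlinarith

end WeightedCauchySchwarz

section DecayAtInfinity

variable {f f' : ℝ → ℝ} {x : ℝ}

theorem abs_le_integral_Ioi_abs_deriv (hderiv : ∀ z ∈ Ici x, HasDerivAt f (f' z) z)
    (hf' : IntegrableOn f' (Ioi x)) (hlim : Tendsto f atTop (𝓝 0)) :
    |f x| ≤ ∫ z in Ioi x, |f' z| :=
  calc |f x| = |∫ z in Ioi x, f' z| := by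
        rw [integral_Ioi_of_hasDerivAt_of_tendsto' hderiv hf' hlim, zero_sub, abs_neg]
    _ ≤ ∫ z in Ioi x, |f' z| := abs_integral_le_integral_abs

theorem sq_le_integral_Ioi_sq_deriv_div_mul_integral_Ioi (hpos : ∀ z ∈ Ioi x, 0 < f z)
    (hderiv : ∀ z ∈ Ici x, HasDerivAt f (f' z) z) (hf : IntegrableOn f (Ioi x))
    (hfisher : IntegrableOn (fun z => f' z ^ 2 / f z) (Ioi x)) (hlim : Tendsto f atTop (𝓝 0)) :
    f x ^ 2 ≤ (∫ z in Ioi x, f' z ^ 2 / f z) * ∫ z in Ioi x, f z := by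
  have hf'm : AEStronglyMeasurable f' (volume.restrict (Ioi x)) :=
    (stronglyMeasurable_deriv f).aestronglyMeasurable.congr <|
      (ae_restrict_mem measurableSet_Ioi).mono fun z hz => (hderiv z (mem_Ici_of_Ioi hz)).deriv
  have hfpos : ∀ᵐ z ∂volume.restrict (Ioi x), 0 < f z :=
    (ae_restrict_mem measurableSet_Ioi).mono hpos
  have hf' := integrable_of_integrable_sq_div hf'm hfpos hfisher hf
  calc f x ^ 2 = |f x| ^ 2 := (sq_abs _).symm
    _ ≤ (∫ z in Ioi x, |f' z|) ^ 2 :=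
      pow_le_pow_left₀ (abs_nonneg _) (abs_le_integral_Ioi_abs_deriv hderiv hf' hlim) 2
    _ ≤ _ := sq_integral_abs_le_integral_sq_div_mul_integral hf'm hfpos hfisher hf

theorem le_inv_mul_mul_of_le {z c : ℝ} (hx : 0 < x) (hxz : x ≤ z) (hc : 0 ≤ c) :
    c ≤ x⁻¹ * (z * c) := by
  rw [le_inv_mul_iff₀ hx]
  exact mul_le_mul_of_nonneg_right hxz hc

theorem integrableOn_Ioi_of_integrableOn_mul_id (hx : 0 < x) (hf : ∀ z ∈ Ioi 0, 0 ≤ f z)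
    (hfm : AEStronglyMeasurable f (volume.restrict (Ioi x)))
    (hint : IntegrableOn (fun z => z * f z) (Ioi 0)) : IntegrableOn f (Ioi x) := by
  refine ((hint.mono_set (Ioi_subset_Ioi hx.le)).const_mul x⁻¹).mono' hfm ?_
  filter_upwards [ae_restrict_mem measurableSet_Ioi] with z hz
  rw [Real.norm_of_nonneg (hf z (hx.trans hz))]
  exact le_inv_mul_mul_of_le hx (le_of_lt hz) (hf z (hx.trans hz))

theorem integral_Ioi_le_inv_mul_integral_mul_id (hx : 0 < x) (hf : ∀ z ∈ Ioi 0, 0 ≤ f z)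
    (hfm : AEStronglyMeasurable f (volume.restrict (Ioi x)))
    (hint : IntegrableOn (fun z => z * f z) (Ioi 0)) :
    ∫ z in Ioi x, f z ≤ x⁻¹ * ∫ z in Ioi 0, z * f z := by
  have hmono : ∫ z in Ioi x, f z ≤ ∫ z in Ioi x, x⁻¹ * (z * f z) :=
    setIntegral_mono_on (integrableOn_Ioi_of_integrableOn_mul_id hx hf hfm hint)
      ((hint.mono_set (Ioi_subset_Ioi hx.le)).const_mul _) measurableSet_Ioi fun z hz =>
        le_inv_mul_mul_of_le hx (le_of_lt hz) (hf z (hx.trans hz))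
  refine hmono.trans ?_
  rw [integral_const_mul]
  refine mul_le_mul_of_nonneg_left ?_ (inv_nonneg.2 hx.le)
  refine setIntegral_mono_set hint ?_ (Ioi_subset_Ioi hx.le).eventuallyLE
  filter_upwards [ae_restrict_mem measurableSet_Ioi] with z hz
  exact mul_nonneg (le_of_lt hz) (hf z hz)

end DecayAtInfinity

theorem pointwise_decay_bound_general
    (f f' : ℝ → ℝ)
    (hpos : ∀ z : ℝ, 0 ≤ z → 0 < f z)
    (hderiv : ∀ z : ℝ, 0 ≤ z → HasDerivAt f (f' z) z)
    (hint1 : IntegrableOn (fun z => z * f z) (Ioi 0))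
    (hfisher : IntegrableOn (fun z => (f' z) ^ 2 / f z) (Ioi 0))
    (hlim : Tendsto f atTop (nhds 0)) :
    ∀ x : ℝ, 0 < x →
      (f x) ^ 2 ≤ (1 / x) * (∫ z in Ioi (0:ℝ), z * f z)
        * ∫ z in Ioi (0:ℝ), (f' z) ^ 2 / f z := by
  intro x hx
  have hIoi : Ioi x ⊆ Ioi 0 := Ioi_subset_Ioi hx.le
  have hf_nonneg : ∀ z ∈ Ioi (0 : ℝ), 0 ≤ f z := fun z hz => (hpos z (le_of_lt hz)).le
  have hfisher_nonneg : ∀ z ∈ Ioi (0 : ℝ), 0 ≤ f' z ^ 2 / f z := fun z hz =>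
    div_nonneg (sq_nonneg _) (hf_nonneg z hz)
  have hfm : AEStronglyMeasurable f (volume.restrict (Ioi x)) :=
    ContinuousOn.aestronglyMeasurable (fun z hz =>
      (hderiv z (hx.trans hz).le).continuousAt.continuousWithinAt) measurableSet_Ioi
  calc f x ^ 2 ≤ (∫ z in Ioi x, f' z ^ 2 / f z) * ∫ z in Ioi x, f z :=
        sq_le_integral_Ioi_sq_deriv_div_mul_integral_Ioi (fun z hz => hpos z (hx.trans hz).le)
          (fun z hz => hderiv z (hx.le.trans hz))
          (integrableOn_Ioi_of_integrableOn_mul_id hx hf_nonneg hfm hint1)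
          (hfisher.mono_set hIoi) hlim
    _ ≤ (∫ z in Ioi 0, f' z ^ 2 / f z) * (x⁻¹ * ∫ z in Ioi 0, z * f z) :=
      mul_le_mul
        (setIntegral_mono_set hfisher
          ((ae_restrict_mem measurableSet_Ioi).mono hfisher_nonneg) hIoi.eventuallyLE)
        (integral_Ioi_le_inv_mul_integral_mul_id hx hf_nonneg hfm hint1)
        (setIntegral_nonneg measurableSet_Ioi fun z hz => hf_nonneg z (hIoi hz))
        (setIntegral_nonneg measurableSet_Ioi hfisher_nonneg)
    _ = 1 / x * (∫ z in Ioi 0, z * f z) * ∫ z in Ioi 0, f' z ^ 2 / f z := by ring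

/-- Pointwise decay bound at infinity: for a positive C¹ function `f` on
`[0,∞)` with `z f(z)` and `f'²/f` integrable and `f → 0` at infinity, for every
`x > 0`, `f(x)² ≤ (1/x) (∫ z f) (∫ f'²/f)`. -/
theorem pointwise_decay_bound
    (f f' : ℝ → ℝ)
    (hpos : ∀ z : ℝ, 0 ≤ z → 0 < f z)
    (hderiv : ∀ z : ℝ, 0 ≤ z → HasDerivAt f (f' z) z)
    (hcont : ContinuousOn f' (Ici 0))
    (hint1 : IntegrableOn (fun z => z * f z) (Ioi 0))
    (hfisher : IntegrableOn (fun z => (f' z) ^ 2 / f z) (Ioi 0))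
    (hlim : Tendsto f atTop (nhds 0)) :
    ∀ x : ℝ, 0 < x →
      (f x) ^ 2 ≤ (1 / x) * (∫ z in Ioi (0:ℝ), z * f z)
        * ∫ z in Ioi (0:ℝ), (f' z) ^ 2 / f z :=
  pointwise_decay_bound_general f f' hpos hderiv hint1 hfisher hlim
end

section
/- Exponential-moment interpolation for the finite-range model: Let α > 0 and let n : [0,∞) → (0,∞) be a C¹ function such that z ↦ e^{αz} n(z) is integrable on (0,∞), e^{αz} n(z) → 0 as z → ∞, and z ↦ e^{−αz} n(z) is non-increasing. Set M = ∫₀^∞ n(z) dz and J = ∫₀^∞ e^{αz} n(z) dz. Then α M⁴ ≤ J² n(0) (J − M²/J). -/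
open MeasureTheory Set Filter

/-!
Put `u(z) = e^{-αz} n(z)`, `K = ∫ u` and `w = -u' ≥ 0`. By Cauchy–Schwarz against the weight
`e^{αz} n`, `M² ≤ J K`. Integrating by parts against `1`, `z` and
`φ(z) = (e^{2αz} - 1 - 2αz) / (2α²)` gives `∫ w = n(0)`, `∫ z w = K` and
`∫ φ w = (J - K) / α`, so Jensen's inequality for the probability density `w / n(0)`
together with `z² ≤ φ(z)` yields `α K² ≤ n(0) (J - K)`. Combining the two with `K ≥ M² / J`
gives the claim.
-/

open Real

theorem sq_integral_mul_le_integral_mul_integral_sq_mul {X : Type*} [MeasurableSpace X]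
    {μ : Measure X} {ρ g : X → ℝ} (hρ : 0 ≤ᵐ[μ] ρ) (hρi : Integrable ρ μ)
    (hgρ : Integrable (fun x => g x * ρ x) μ) (hg2ρ : Integrable (fun x => g x ^ 2 * ρ x) μ) :
    (∫ x, g x * ρ x ∂μ) ^ 2 ≤ (∫ x, ρ x ∂μ) * ∫ x, g x ^ 2 * ρ x ∂μ := by
  have hquad : ∀ t : ℝ, 0 ≤ (∫ x, ρ x ∂μ) * (t * t) + (-2 * ∫ x, g x * ρ x ∂μ) * t
      + ∫ x, g x ^ 2 * ρ x ∂μ := by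
    intro t
    calc 0 ≤ ∫ x, (t - g x) ^ 2 * ρ x ∂μ :=
          integral_nonneg_of_ae (hρ.mono fun x hx => mul_nonneg (sq_nonneg _) hx)
      _ = ∫ x, (t * t * ρ x - 2 * t * (g x * ρ x) + g x ^ 2 * ρ x) ∂μ := by
          congr 1; ext x; ring
      _ = _ := by
          have hlin : Integrable (fun x => t * t * ρ x - 2 * t * (g x * ρ x)) μ :=
            (hρi.const_mul _).sub (hgρ.const_mul _)
          rw [integral_add hlin hg2ρ, integral_sub (hρi.const_mul _) (hgρ.const_mul _),
            integral_const_mul, integral_const_mul]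
          ring
  have := discrim_le_zero hquad
  rw [discrim] at this
  linarith

theorem setIntegral_pos_of_forall_pos {X : Type*} [MeasurableSpace X] {μ : Measure X}
    {s : Set X} {f : X → ℝ} (hs : MeasurableSet s) (hμs : μ s ≠ 0) (hf : ∀ x ∈ s, 0 < f x)
    (hfi : IntegrableOn f s μ) : 0 < ∫ x in s, f x ∂μ := by
  have hsupp : Function.support f ∩ s = s := inter_eq_right.2 fun x hx => (hf x hx).ne'
  rw [setIntegral_pos_iff_support_of_nonneg_ae
    ((ae_restrict_iff' hs).2 (ae_of_all _ fun x hx => (hf x hx).le)) hfi, hsupp]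
  exact pos_iff_ne_zero.2 hμs

theorem integrableOn_exp_mul_of_le {g : ℝ → ℝ} {b c : ℝ}
    (hg : IntegrableOn (fun z => exp (c * z) * g z) (Ioi 0)) (hbc : b ≤ c) :
    IntegrableOn (fun z => exp (b * z) * g z) (Ioi 0) := by
  have h : IntegrableOn (fun z => exp ((b - c) * z) * (exp (c * z) * g z)) (Ioi 0) := by
    refine Integrable.bdd_mul (c := 1) hg (by fun_prop) ?_
    filter_upwards [ae_restrict_mem measurableSet_Ioi] with z hz
    rw [norm_of_nonneg (exp_pos _).le, exp_le_one_iff]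
    exact mul_nonpos_of_nonpos_of_nonneg (by linarith) hz.out.le
  refine h.congr_fun (fun z _ => ?_) measurableSet_Ioi
  simp only [← mul_assoc, ← exp_add]
  ring_nf

theorem continuousWithinAt_Ici_primitive {f : ℝ → ℝ} {a : ℝ} (hf : IntegrableOn f (Ioi a)) :
    ContinuousWithinAt (fun z => ∫ t in a..z, f t) (Ici a) a := by
  have hint : IntervalIntegrable f volume (min a a) (max a (a + 1)) := by
    rw [min_self, max_eq_right (by linarith),
      intervalIntegrable_iff_integrableOn_Ioc_of_le (by linarith)]
    exact hf.mono_set Ioc_subset_Ioi_self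
  have h := intervalIntegral.continuousWithinAt_primitive (b₀ := a) (by simp) hint
  rwa [ContinuousWithinAt, nhdsWithin_Icc_eq_nhdsGE (by linarith)] at h

theorem integrableOn_and_integral_Ioi_mul_neg_deriv {a : ℝ} {φ φ' u u' : ℝ → ℝ}
    (hφ : ∀ x ∈ Ici a, HasDerivAt φ (φ' x) x) (hφ' : ContinuousOn φ' (Ici a))
    (hu : ∀ x ∈ Ici a, HasDerivAt u (u' x) x)
    (hφ_nonneg : ∀ x ∈ Ioi a, 0 ≤ φ x) (hu' : ∀ x ∈ Ioi a, u' x ≤ 0)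
    (hφ'u : IntegrableOn (fun x => φ' x * u x) (Ioi a))
    (hφu : Tendsto (fun x => φ x * u x) atTop (nhds 0)) :
    IntegrableOn (fun x => φ x * -u' x) (Ioi a) ∧
      ∫ x in Ioi a, φ x * -u' x = φ a * u a + ∫ x in Ioi a, φ' x * u x := by
  -- a primitive of `φ (-u') ≥ 0` with a limit at infinity, hence `φ (-u')` is integrable
  set G := fun z => -(φ z * u z) + ∫ t in a..z, φ' t * u t
  have hcont : ContinuousOn (fun x => φ' x * u x) (Ici a) :=
    hφ'.mul fun x hx => (hu x hx).continuousAt.continuousWithinAt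
  have hG : ∀ x ∈ Ioi a, HasDerivAt G (φ x * -u' x) x := by
    intro x hx
    have hprim : HasDerivAt (fun z => ∫ t in a..z, φ' t * u t) (φ' x * u x) x :=
      intervalIntegral.integral_hasDerivAt_right
        ((intervalIntegrable_iff_integrableOn_Ioc_of_le hx.out.le).2
          (hφ'u.mono_set Ioc_subset_Ioi_self))
        ((hcont.mono Ioi_subset_Ici_self).stronglyMeasurableAtFilter isOpen_Ioi x hx)
        (hcont.continuousAt (Ici_mem_nhds hx))
    refine (((hφ x hx.out.le).mul (hu x hx.out.le)).neg.add hprim).congr_deriv ?_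
    ring
  have hG0 : ContinuousWithinAt G (Ici a) a :=
    ((hφ a self_mem_Ici).continuousAt.mul (hu a self_mem_Ici).continuousAt).neg
      |>.continuousWithinAt.add (continuousWithinAt_Ici_primitive hφ'u)
  have hGlim : Tendsto G atTop (nhds (∫ x in Ioi a, φ' x * u x)) := by
    simpa using hφu.neg.add (intervalIntegral_tendsto_integral_Ioi a hφ'u tendsto_id)
  have hnonneg : ∀ x ∈ Ioi a, 0 ≤ φ x * -u' x :=
    fun x hx => mul_nonneg (hφ_nonneg x hx) (neg_nonneg.2 (hu' x hx))
  refine ⟨integrableOn_Ioi_deriv_of_nonneg hG0 hG hnonneg hGlim, ?_⟩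
  rw [integral_Ioi_of_hasDerivAt_of_nonneg hG0 hG hnonneg hGlim]
  simp [G, add_comm]

theorem tendsto_pow_mul_of_tendsto_exp_mul {β : ℝ} (hβ : 0 < β) {u : ℝ → ℝ}
    (hlim : Tendsto (fun z => exp (β * z) * u z) atTop (nhds 0)) (k : ℕ) :
    Tendsto (fun z => z ^ k * u z) atTop (nhds 0) := by
  have h := (tendsto_rpow_mul_exp_neg_mul_atTop_nhds_zero k β hβ).mul hlim
  rw [mul_zero] at h
  refine h.congr fun z => ?_
  rw [rpow_natCast, mul_assoc, ← mul_assoc (exp _), ← exp_add]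
  simp

theorem integrableOn_and_integral_Ioi_sq_mul_neg_deriv_le {β : ℝ} (hβ : 0 < β)
    {u u' : ℝ → ℝ}
    (hu : ∀ z ∈ Ici 0, HasDerivAt u (u' z) z) (hu' : ∀ z ∈ Ioi 0, u' z ≤ 0)
    (hint : IntegrableOn (fun z => exp (β * z) * u z) (Ioi 0))
    (hlim : Tendsto (fun z => exp (β * z) * u z) atTop (nhds 0)) :
    IntegrableOn (fun z => z ^ 2 * -u' z) (Ioi 0) ∧
      ∫ z in Ioi 0, z ^ 2 * -u' z
        ≤ 2 / β * ((∫ z in Ioi 0, exp (β * z) * u z) - ∫ z in Ioi 0, u z) := by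
  have hu_int : IntegrableOn u (Ioi 0) := by
    simpa using integrableOn_exp_mul_of_le hint (b := 0) hβ.le
  set φ : ℝ → ℝ := fun z => 2 * (exp (β * z) - 1 - β * z) / β ^ 2
  have hφ : ∀ z ∈ Ici (0 : ℝ), HasDerivAt φ (2 * (exp (β * z) - 1) / β) z := by
    intro z _
    have hexp := ((hasDerivAt_id' z).const_mul β).exp
    refine ((((hexp.sub_const 1).sub ((hasDerivAt_id' z).const_mul β)).const_mul 2).div_const
      (β ^ 2)).congr_deriv ?_
    field_simp
  have hsq_le : ∀ z ∈ Ioi (0 : ℝ), z ^ 2 ≤ φ z := by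
    intro z hz
    have := quadratic_le_exp_of_nonneg (mul_pos hβ hz).le
    rw [le_div_iff₀ (by positivity)]
    nlinarith
  have hφu : Tendsto (fun z => φ z * u z) atTop (nhds 0) := by
    have hu_lim : Tendsto u atTop (nhds 0) := by
      simpa using tendsto_pow_mul_of_tendsto_exp_mul hβ hlim 0
    have hzu_lim : Tendsto (fun z => z * u z) atTop (nhds 0) := by
      simpa using tendsto_pow_mul_of_tendsto_exp_mul hβ hlim 1
    have h := ((hlim.sub hu_lim).sub (hzu_lim.const_mul β)).const_mul (2 / β ^ 2)
    simp only [sub_zero, mul_zero] at h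
    refine h.congr fun z => ?_
    simp only [φ]
    ring
  have hφ'u : (fun z => 2 * (exp (β * z) - 1) / β * u z)
      = fun z => 2 / β * (exp (β * z) * u z - u z) := by
    ext z; ring
  have hφ'u_int : IntegrableOn (fun z => 2 * (exp (β * z) - 1) / β * u z) (Ioi 0) := by
    rw [hφ'u]
    exact (hint.sub hu_int).const_mul (2 / β)
  obtain ⟨hφw_int, hφw⟩ := integrableOn_and_integral_Ioi_mul_neg_deriv hφ (by fun_prop) hu
    (fun z hz => (sq_nonneg z).trans (hsq_le z hz)) hu' hφ'u_int hφu
  rw [hφ'u, integral_const_mul, integral_sub hint hu_int] at hφw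
  have hz2w_int : IntegrableOn (fun z => z ^ 2 * -u' z) (Ioi 0) := by
    have hw_meas : AEStronglyMeasurable (fun z => -u' z) (volume.restrict (Ioi 0)) :=
      (measurable_deriv u).neg.aestronglyMeasurable.congr <|
        (ae_restrict_iff' measurableSet_Ioi).2 <| ae_of_all _ fun z hz => by
          simp [(hu z (mem_Ici_of_Ioi hz)).deriv]
    refine hφw_int.mono' ((continuous_pow 2).aestronglyMeasurable.mul hw_meas) ?_
    filter_upwards [ae_restrict_mem measurableSet_Ioi] with z hz
    have hw := neg_nonneg.2 (hu' z hz)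
    rw [norm_of_nonneg (by positivity)]
    exact mul_le_mul_of_nonneg_right (hsq_le z hz) hw
  refine ⟨hz2w_int, ?_⟩
  calc ∫ z in Ioi 0, z ^ 2 * -u' z ≤ ∫ z in Ioi 0, φ z * -u' z :=
        setIntegral_mono_on hz2w_int hφw_int measurableSet_Ioi fun z hz =>
          mul_le_mul_of_nonneg_right (hsq_le z hz) (neg_nonneg.2 (hu' z hz))
    _ = _ := by rw [hφw]; simp [φ]

theorem mul_sq_integral_le_of_hasDerivAt_nonpos {β : ℝ} (hβ : 0 < β) {u u' : ℝ → ℝ}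
    (hu : ∀ z ∈ Ici 0, HasDerivAt u (u' z) z) (hu' : ∀ z ∈ Ioi 0, u' z ≤ 0)
    (hint : IntegrableOn (fun z => exp (β * z) * u z) (Ioi 0))
    (hlim : Tendsto (fun z => exp (β * z) * u z) atTop (nhds 0)) :
    β * (∫ z in Ioi 0, u z) ^ 2
      ≤ 2 * u 0 * ((∫ z in Ioi 0, exp (β * z) * u z) - ∫ z in Ioi 0, u z) := by
  have hu_int : IntegrableOn u (Ioi 0) := by
    simpa using integrableOn_exp_mul_of_le hint (b := 0) hβ.le
  have hu_lim : Tendsto u atTop (nhds 0) := by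
    simpa using tendsto_pow_mul_of_tendsto_exp_mul hβ hlim 0
  have hzu_lim : Tendsto (fun z => z * u z) atTop (nhds 0) := by
    simpa using tendsto_pow_mul_of_tendsto_exp_mul hβ hlim 1
  obtain ⟨hw_int, hw⟩ := integrableOn_and_integral_Ioi_mul_neg_deriv (φ := fun _ => 1)
    (φ' := fun _ => 0) (fun z _ => hasDerivAt_const z 1) continuousOn_const hu
    (fun _ _ => zero_le_one) hu' (by simp) (by simpa using hu_lim)
  obtain ⟨hzw_int, hzw⟩ := integrableOn_and_integral_Ioi_mul_neg_deriv (φ := fun z => z)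
    (φ' := fun _ => 1) (fun z _ => hasDerivAt_id' z) continuousOn_const hu
    (fun z hz => hz.out.le) hu' (by simpa using hu_int) hzu_lim
  obtain ⟨hz2w_int, hz2w⟩ :=
    integrableOn_and_integral_Ioi_sq_mul_neg_deriv_le hβ hu hu' hint hlim
  simp only [one_mul, zero_mul, integral_zero, add_zero, zero_add] at hw_int hw hzw
  have hjensen := sq_integral_mul_le_integral_mul_integral_sq_mul
    ((ae_restrict_iff' measurableSet_Ioi).2 (ae_of_all _ fun z hz => neg_nonneg.2 (hu' z hz)))
    hw_int hzw_int hz2w_int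
  rw [hw, hzw] at hjensen
  have hu0 : 0 ≤ u 0 :=
    hw ▸ setIntegral_nonneg measurableSet_Ioi fun z hz => neg_nonneg.2 (hu' z hz)
  calc β * (∫ z in Ioi 0, u z) ^ 2
      ≤ β * (u 0 * (2 / β * ((∫ z in Ioi 0, exp (β * z) * u z) - ∫ z in Ioi 0, u z))) := by
        gcongr
        exact hjensen.trans (by gcongr)
    _ = 2 * u 0 * ((∫ z in Ioi 0, exp (β * z) * u z) - ∫ z in Ioi 0, u z) := by
        field_simp

theorem sq_integral_le_integral_exp_mul_mul_integral_exp_neg_mul {α : ℝ} (hα : 0 ≤ α)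
    {n : ℝ → ℝ} (hn : ∀ z ∈ Ioi 0, 0 ≤ n z)
    (hint : IntegrableOn (fun z => exp (α * z) * n z) (Ioi 0)) :
    (∫ z in Ioi 0, n z) ^ 2
      ≤ (∫ z in Ioi 0, exp (α * z) * n z) * ∫ z in Ioi 0, exp (-α * z) * n z := by
  have hcancel : ∀ z, exp (-α * z) * (exp (α * z) * n z) = n z := fun z => by
    rw [← mul_assoc, ← exp_add]; simp
  have hcancel_sq : ∀ z, exp (-α * z) ^ 2 * (exp (α * z) * n z) = exp (-α * z) * n z :=
    fun z => by rw [sq, mul_assoc, hcancel]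
  have hn_int : IntegrableOn n (Ioi 0) := by simpa using integrableOn_exp_mul_of_le hint hα
  have h := sq_integral_mul_le_integral_mul_integral_sq_mul (g := fun z => exp (-α * z))
    ((ae_restrict_iff' measurableSet_Ioi).2
      (ae_of_all _ fun z hz => mul_nonneg (exp_pos _).le (hn z hz))) hint
    (by simp only [hcancel]; exact hn_int)
    (by simp only [hcancel_sq]; exact integrableOn_exp_mul_of_le hint (by linarith))
  simpa only [hcancel, hcancel_sq] using h

theorem exponential_moment_interpolation_general
    (α : ℝ) (hα : 0 < α)
    (n n' : ℝ → ℝ)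
    (hpos : ∀ z : ℝ, 0 ≤ z → 0 < n z)
    (hderiv : ∀ z : ℝ, 0 ≤ z → HasDerivAt n (n' z) z)
    (hint : IntegrableOn (fun z => Real.exp (α * z) * n z) (Ioi 0))
    (hlim : Tendsto (fun z => Real.exp (α * z) * n z) atTop (nhds 0))
    (hmono : AntitoneOn (fun z => Real.exp (-α * z) * n z) (Ici 0)) :
    α * (∫ z in Ioi (0:ℝ), n z) ^ 4
      ≤ (∫ z in Ioi (0:ℝ), Real.exp (α * z) * n z) ^ 2 * n 0
          * ((∫ z in Ioi (0:ℝ), Real.exp (α * z) * n z)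
              - (∫ z in Ioi (0:ℝ), n z) ^ 2
                  / (∫ z in Ioi (0:ℝ), Real.exp (α * z) * n z)) := by
  have hu : ∀ z ∈ Ici (0 : ℝ),
      HasDerivAt (fun z => exp (-α * z) * n z) (exp (-α * z) * (n' z - α * n z)) z :=
    fun z hz => ((((hasDerivAt_id' z).const_mul (-α)).exp).mul (hderiv z hz)).congr_deriv
      (by ring)
  have hu' : ∀ z ∈ Ioi (0 : ℝ), exp (-α * z) * (n' z - α * n z) ≤ 0 := fun z hz =>
    (hu z (mem_Ici_of_Ioi hz)).hasDerivWithinAt.nonpos_of_antitoneOn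
      (isOpen_Ioi.preperfect z hz) (hmono.mono Ioi_subset_Ici_self)
  have hshift : ∀ z, exp (2 * α * z) * (exp (-α * z) * n z) = exp (α * z) * n z := fun z => by
    rw [← mul_assoc, ← exp_add]
    ring_nf
  have hjensen := mul_sq_integral_le_of_hasDerivAt_nonpos (β := 2 * α) (by positivity) hu hu'
    (by simpa only [hshift] using hint) (by simpa only [hshift] using hlim)
  simp only [hshift, mul_zero, exp_zero, one_mul] at hjensen
  have hcs := sq_integral_le_integral_exp_mul_mul_integral_exp_neg_mul hα.le
    (fun z hz => (hpos z (le_of_lt hz)).le) hint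
  have hJ : 0 < ∫ z in Ioi (0 : ℝ), exp (α * z) * n z := setIntegral_pos_of_forall_pos
    measurableSet_Ioi (by simp) (fun z hz => mul_pos (exp_pos _) (hpos z (le_of_lt hz))) hint
  have hn0 := (hpos 0 le_rfl).le
  set M := ∫ z in Ioi (0 : ℝ), n z
  set J := ∫ z in Ioi (0 : ℝ), exp (α * z) * n z
  set K := ∫ z in Ioi (0 : ℝ), exp (-α * z) * n z
  have hK : M ^ 2 / J ≤ K := by rw [div_le_iff₀ hJ]; linarith
  calc α * M ^ 4 ≤ α * (J * K) ^ 2 := by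
        rw [show M ^ 4 = (M ^ 2) ^ 2 by ring]; gcongr
    _ = J ^ 2 * (2 * α * K ^ 2) / 2 := by ring
    _ ≤ J ^ 2 * (2 * n 0 * (J - K)) / 2 := by gcongr
    _ = J ^ 2 * n 0 * (J - K) := by ring
    _ ≤ J ^ 2 * n 0 * (J - M ^ 2 / J) := by gcongr

/-- Exponential-moment interpolation for the finite-range model: if `n > 0` is
C¹ on `[0,∞)`, `e^{αz} n` is integrable and tends to `0` at infinity, and
`e^{−αz} n` is non-increasing, then with `M = ∫ n` and `J = ∫ e^{αz} n`,
`α M⁴ ≤ J² n(0) (J − M²/J)`. -/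
theorem exponential_moment_interpolation
    (α : ℝ) (hα : 0 < α)
    (n n' : ℝ → ℝ)
    (hpos : ∀ z : ℝ, 0 ≤ z → 0 < n z)
    (hderiv : ∀ z : ℝ, 0 ≤ z → HasDerivAt n (n' z) z)
    (hcont : ContinuousOn n' (Ici 0))
    (hint : IntegrableOn (fun z => Real.exp (α * z) * n z) (Ioi 0))
    (hlim : Tendsto (fun z => Real.exp (α * z) * n z) atTop (nhds 0))
    (hmono : AntitoneOn (fun z => Real.exp (-α * z) * n z) (Ici 0)) :
    α * (∫ z in Ioi (0:ℝ), n z) ^ 4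
      ≤ (∫ z in Ioi (0:ℝ), Real.exp (α * z) * n z) ^ 2 * n 0
          * ((∫ z in Ioi (0:ℝ), Real.exp (α * z) * n z)
              - (∫ z in Ioi (0:ℝ), n z) ^ 2
                  / (∫ z in Ioi (0:ℝ), Real.exp (α * z) * n z)) :=
  exponential_moment_interpolation_general α hα n n' hpos hderiv hint hlim hmono
end

section
/- Monotone vector field lemma (Section 5.3): Let d ≥ 1 and let f : ℝ^d × [0,∞) → (0,∞) be a smooth positive function, writing f(y,z) for y ∈ ℝ^d and z ≥ 0. Assume ∂_z f(y,z) ≤ 0 for all (y,z), and that for all z > 0, y ∈ ℝ^d and h ∈ ℝ^d one has (h·y)·(h · ∂_z ∇_y log f(y,z)) ≥ 0. Then for all y, y' ∈ ℝ^d and all z > 0: (y − y') · ( f(y',0) f(y,z) y − f(y,0) f(y',z) y' ) ≥ |y − y'|² f(y,z) f(y',z). -/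
open MeasureTheory Set Filter
open scoped RealInnerProductSpace

set_option maxHeartbeats 800000

/-- Monotone vector field lemma (Section 5.3): if `f > 0` is smooth with
`∂_z f ≤ 0` and `(h·y)(h·∂_z∇_y log f) ≥ 0` for all `h`, then for all `y, y'`
and `z > 0`,
`(y−y') · (f(y',0) f(y,z) y − f(y,0) f(y',z) y') ≥ |y−y'|² f(y,z) f(y',z)`. -/
theorem monotone_vector_field
    (d : ℕ) (hd : 1 ≤ d)
    (f fz : EuclideanSpace ℝ (Fin d) → ℝ → ℝ)
    (g gz : EuclideanSpace ℝ (Fin d) → ℝ → EuclideanSpace ℝ (Fin d))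
    (hsmooth : ContDiff ℝ (⊤ : ℕ∞) (fun p : EuclideanSpace ℝ (Fin d) × ℝ => f p.1 p.2))
    (hpos : ∀ (y : EuclideanSpace ℝ (Fin d)) (z : ℝ), 0 ≤ z → 0 < f y z)
    -- fz is the partial derivative ∂_z f, and it is non-positive
    (hfz : ∀ (y : EuclideanSpace ℝ (Fin d)) (z : ℝ), 0 ≤ z →
      HasDerivAt (fun w => f y w) (fz y z) z)
    (hfz_nonpos : ∀ (y : EuclideanSpace ℝ (Fin d)) (z : ℝ), 0 ≤ z → fz y z ≤ 0)
    -- g is the gradient in y of log f, gz its derivative in z (∂_z ∇_y log f)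
    (hg : ∀ (y : EuclideanSpace ℝ (Fin d)) (z : ℝ), 0 ≤ z →
      HasGradientAt (fun y' => Real.log (f y' z)) (g y z) y)
    (hgz : ∀ (y : EuclideanSpace ℝ (Fin d)) (z : ℝ), 0 ≤ z →
      HasDerivAt (fun w => g y w) (gz y z) z)
    -- the monotonicity hypothesis (h·y)(h·∂_z∇_y log f) ≥ 0
    (hmon : ∀ z : ℝ, 0 < z → ∀ y h : EuclideanSpace ℝ (Fin d),
      0 ≤ ⟪h, y⟫ * ⟪h, gz y z⟫) :
    ∀ (y y' : EuclideanSpace ℝ (Fin d)) (z : ℝ), 0 < z →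
      ‖y - y'‖ ^ 2 * (f y z * f y' z)
        ≤ ⟪y - y', (f y' 0 * f y z) • y - (f y 0 * f y' z) • y'⟫ := by
  intro y y' z hz
  have hz0 : (0:ℝ) ≤ z := hz.le
  set h := y - y' with hh
  -- Step 1 : f w z ≤ f w 0
  have hle : ∀ w, f w z ≤ f w 0 := by
    intro w
    have hanti : AntitoneOn (fun s => f w s) (Set.Icc 0 z) := by
      apply antitoneOn_of_deriv_nonpos (convex_Icc 0 z)
      · intro s hs
        exact (hfz w s hs.1).continuousAt.continuousWithinAt
      · intro s hs
        rw [interior_Icc] at hs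
        exact (hfz w s hs.1.le).differentiableAt.differentiableWithinAt
      · intro s hs
        rw [interior_Icc] at hs
        rw [(hfz w s hs.1.le).deriv]
        exact hfz_nonpos w s hs.1.le
    exact hanti (Set.left_mem_Icc.2 hz0) (Set.right_mem_Icc.2 hz0) hz0
  -- Step 2 : sign lemma
  have hsign : ∀ w, 0 ≤ ⟪h, w⟫ * ⟪h, g w z - g w 0⟫ := by
    intro w
    have hmono : MonotoneOn (fun s => ⟪h, w⟫ * ⟪h, g w s⟫) (Set.Icc 0 z) := by
      have hDs : ∀ s : ℝ, 0 ≤ s → HasDerivAt (fun s => ⟪h, w⟫ * ⟪h, g w s⟫)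
          (⟪h, w⟫ * ⟪h, gz w s⟫) s := by
        intro s hs
        have h1 : HasDerivAt (fun s => ⟪h, g w s⟫) ⟪h, gz w s⟫ s := by
          have := ((innerSL ℝ h).hasFDerivAt).comp_hasDerivAt s (hgz w s hs)
          simpa [Function.comp_def] using this
        exact h1.const_mul _
      apply monotoneOn_of_deriv_nonneg (convex_Icc 0 z)
      · intro s hs
        exact (hDs s hs.1).continuousAt.continuousWithinAt
      · intro s hs
        rw [interior_Icc] at hs
        exact (hDs s hs.1.le).differentiableAt.differentiableWithinAt
      · intro s hs
        rw [interior_Icc] at hs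
        rw [(hDs s hs.1.le).deriv]
        exact hmon s hs.1 w h
    have h2 : (⟪h, w⟫ : ℝ) * ⟪h, g w 0⟫ ≤ ⟪h, w⟫ * ⟪h, g w z⟫ :=
      hmono (Set.left_mem_Icc.2 hz0) (Set.right_mem_Icc.2 hz0) hz0
    rw [inner_sub_right]
    nlinarith [h2]
  -- the segment
  set γ : ℝ → EuclideanSpace ℝ (Fin d) := fun t => y' + t • h with hγ
  have hγd : ∀ t : ℝ, HasDerivAt γ h t := by
    intro t
    have := ((hasDerivAt_id t).smul_const h).const_add y'
    simpa [hγ] using this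
  have hγ0 : γ 0 = y' := by simp [hγ]
  have hγ1 : γ 1 = y := by simp [hγ, hh]
  set q : ℝ → ℝ := fun t => Real.log (f (γ t) z) - Real.log (f (γ t) 0) with hq'
  have hq : ∀ t : ℝ, HasDerivAt q (⟪g (γ t) z - g (γ t) 0, h⟫) t := by
    intro t
    have h1 : HasDerivAt (fun t => Real.log (f (γ t) z)) ⟪g (γ t) z, h⟫ t := by
      have := (hg (γ t) z hz0).hasFDerivAt.comp_hasDerivAt t (hγd t)
      simpa [Function.comp_def, InnerProductSpace.toDual_apply_apply] using this
    have h0 : HasDerivAt (fun t => Real.log (f (γ t) 0)) ⟪g (γ t) 0, h⟫ t := by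
      have := (hg (γ t) 0 le_rfl).hasFDerivAt.comp_hasDerivAt t (hγd t)
      simpa [Function.comp_def, InnerProductSpace.toDual_apply_apply] using this
    have := h1.sub h0
    rw [inner_sub_left]; exact this
  have hqle : ∀ t : ℝ, q t ≤ 0 := by
    intro t
    have := Real.log_le_log (hpos (γ t) z hz0) (hle (γ t))
    simp only [hq']
    linarith
  have hι : ∀ t : ℝ, HasDerivAt (fun t => (⟪h, γ t⟫ : ℝ)) ⟪h, h⟫ t := by
    intro t
    have := ((innerSL ℝ h).hasFDerivAt).comp_hasDerivAt t (hγd t)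
    simpa [Function.comp_def] using this
  -- Step 3 : the ε-regularized monotonicity along the segment
  have main : ∀ ε : ℝ, 0 < ε → ε < 1 →
      (1-ε) * Real.exp (q 0) / (1 - (1-ε) * Real.exp (q 0)) * ⟪h, y'⟫
        ≤ (1-ε) * Real.exp (q 1) / (1 - (1-ε) * Real.exp (q 1)) * ⟪h, y⟫ := by
    intro ε hε hε1
    set ψ : ℝ → ℝ := fun t =>
      (1-ε) * Real.exp (q t) / (1 - (1-ε) * Real.exp (q t)) * ⟪h, γ t⟫ with hψdef
    have hDlb : ∀ t : ℝ, ε ≤ 1 - (1-ε) * Real.exp (q t) := by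
      intro t
      have h1 : Real.exp (q t) ≤ 1 := Real.exp_le_one_iff.2 (hqle t)
      nlinarith [Real.exp_pos (q t)]
    have hDpos : ∀ t : ℝ, 0 < 1 - (1-ε) * Real.exp (q t) :=
      fun t => lt_of_lt_of_le hε (hDlb t)
    have hψd : ∀ t : ℝ, HasDerivAt ψ
        ((1-ε) * Real.exp (q t) * ⟪g (γ t) z - g (γ t) 0, h⟫
            / (1 - (1-ε) * Real.exp (q t))^2 * ⟪h, γ t⟫
          + (1-ε) * Real.exp (q t) / (1 - (1-ε) * Real.exp (q t)) * ⟪h, h⟫) t := by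
      intro t
      have hN : HasDerivAt (fun t => (1-ε) * Real.exp (q t))
          ((1-ε) * (Real.exp (q t) * ⟪g (γ t) z - g (γ t) 0, h⟫)) t :=
        ((hq t).exp).const_mul (1-ε)
      have hD : HasDerivAt (fun t => 1 - (1-ε) * Real.exp (q t))
          (-((1-ε) * (Real.exp (q t) * ⟪g (γ t) z - g (γ t) 0, h⟫))) t :=
        hN.const_sub 1
      have hdiv := hN.div hD (ne_of_gt (hDpos t))
      have h2 := hdiv.mul (hι t)
      have hval : ((1-ε) * (Real.exp (q t) * ⟪g (γ t) z - g (γ t) 0, h⟫)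
            * (1 - (1-ε) * Real.exp (q t))
            - (1-ε) * Real.exp (q t)
              * -((1-ε) * (Real.exp (q t) * ⟪g (γ t) z - g (γ t) 0, h⟫)))
            / (1 - (1-ε) * Real.exp (q t)) ^ 2 * ⟪h, γ t⟫
          + (1-ε) * Real.exp (q t) / (1 - (1-ε) * Real.exp (q t)) * ⟪h, h⟫
        = (1-ε) * Real.exp (q t) * ⟪g (γ t) z - g (γ t) 0, h⟫
            / (1 - (1-ε) * Real.exp (q t))^2 * ⟪h, γ t⟫
          + (1-ε) * Real.exp (q t) / (1 - (1-ε) * Real.exp (q t)) * ⟪h, h⟫ := by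
        have hnum : ((1-ε) * (Real.exp (q t) * ⟪g (γ t) z - g (γ t) 0, h⟫)
            * (1 - (1-ε) * Real.exp (q t))
            - (1-ε) * Real.exp (q t)
              * -((1-ε) * (Real.exp (q t) * ⟪g (γ t) z - g (γ t) 0, h⟫)))
          = (1-ε) * Real.exp (q t) * ⟪g (γ t) z - g (γ t) 0, h⟫ := by ring
        rw [hnum]
      exact hval ▸ h2
    have hmono : MonotoneOn ψ (Set.Icc 0 1) := by
      apply monotoneOn_of_deriv_nonneg (convex_Icc 0 1)
      · intro t ht
        exact (hψd t).continuousAt.continuousWithinAt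
      · intro t ht
        exact (hψd t).differentiableAt.differentiableWithinAt
      · intro t ht
        rw [(hψd t).deriv]
        set a := Real.exp (q t)
        set C := (⟪g (γ t) z - g (γ t) 0, h⟫ : ℝ)
        set ι := (⟪h, γ t⟫ : ℝ)
        set D := 1 - (1-ε) * a with hD
        have hCι : 0 ≤ ι * C := by
          have h3 := hsign (γ t)
          rwa [show (⟪h, g (γ t) z - g (γ t) 0⟫ : ℝ) = C from real_inner_comm _ _] at h3
        have hDp : 0 < D := hDpos t
        have hap : 0 < a := Real.exp_pos _
        have hhh : (0:ℝ) ≤ ⟪h, h⟫ := real_inner_self_nonneg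
        have t1 : 0 ≤ (1-ε) * a * C / D^2 * ι := by
          rw [div_mul_eq_mul_div]
          apply div_nonneg _ (sq_nonneg D)
          nlinarith [mul_nonneg (mul_nonneg (by linarith : (0:ℝ) ≤ 1-ε) hap.le) hCι]
        have t2 : 0 ≤ (1-ε) * a / D * ⟪h, h⟫ :=
          mul_nonneg (div_nonneg (by nlinarith) hDp.le) hhh
        linarith
    have := hmono (Set.left_mem_Icc.2 zero_le_one) (Set.right_mem_Icc.2 zero_le_one)
      zero_le_one
    simpa [hψdef, hγ0, hγ1] using this
  -- Step 4 : pass to the limit ε → 0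
  set a := Real.exp (q 1) with ha
  set b := Real.exp (q 0) with hb
  set p := (⟪h, y⟫ : ℝ) with hp
  set p' := (⟪h, y'⟫ : ℝ) with hp'
  have hap : 0 < a := Real.exp_pos _
  have hbp : 0 < b := Real.exp_pos _
  have ha1 : a ≤ 1 := Real.exp_le_one_iff.2 (hqle 1)
  have hb1 : b ≤ 1 := Real.exp_le_one_iff.2 (hqle 0)
  have hpp' : p - p' = ⟪h, h⟫ := by rw [hp, hp', ← inner_sub_right]
  have hhh : (0:ℝ) ≤ ⟪h, h⟫ := real_inner_self_nonneg
  have key : ∀ ε : ℝ, 0 < ε → ε < 1 →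
      0 ≤ a * (1 - b) * p - b * (1 - a) * p' + ε * (a * b * (p - p')) := by
    intro ε hε hε1
    have h1 := main ε hε hε1
    have hDa : 0 < 1 - (1-ε) * a := by nlinarith
    have hDb : 0 < 1 - (1-ε) * b := by nlinarith
    rw [div_mul_eq_mul_div, div_mul_eq_mul_div, div_le_div_iff₀ hDb hDa] at h1
    nlinarith [h1]
  have hA0 : 0 ≤ a * (1 - b) * p - b * (1 - a) * p' := by
    have : ∀ δ : ℝ, 0 < δ → (0:ℝ) ≤ a * (1 - b) * p - b * (1 - a) * p' + δ := by
      intro δ hδ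
      set C := a * b * (p - p') with hC
      have hCnn : 0 ≤ C := by
        rw [hC, hpp']; positivity
      set ε := min (1/2) (δ / (C + 1)) with hε
      have hεpos : 0 < ε := lt_min (by norm_num) (div_pos hδ (by linarith))
      have hε1 : ε < 1 := lt_of_le_of_lt (min_le_left _ _) (by norm_num)
      have hεle : ε ≤ δ / (C + 1) := min_le_right _ _
      have h2 : ε * C ≤ δ / (C + 1) * C := mul_le_mul_of_nonneg_right hεle hCnn
      have h3 : δ / (C + 1) * C ≤ δ := by
        rw [div_mul_eq_mul_div, div_le_iff₀ (by linarith : (0:ℝ) < C + 1)]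
        nlinarith
      have h4 := key ε hεpos hε1
      linarith
    exact le_of_forall_pos_le_add this
  -- Step 5 : unfold a, b and conclude
  have hu : 0 < f y z := hpos y z hz0
  have hv : 0 < f y 0 := hpos y 0 le_rfl
  have hu' : 0 < f y' z := hpos y' z hz0
  have hv' : 0 < f y' 0 := hpos y' 0 le_rfl
  have hq1 : q 1 = Real.log (f y z) - Real.log (f y 0) := by
    simp only [hq']
    rw [hγ1]
  have hq0 : q 0 = Real.log (f y' z) - Real.log (f y' 0) := by
    simp only [hq']
    rw [hγ0]
  have haval : a = f y z / f y 0 := by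
    rw [ha, hq1, Real.exp_sub, Real.exp_log hu, Real.exp_log hv]
  have hbval : b = f y' z / f y' 0 := by
    rw [hb, hq0, Real.exp_sub, Real.exp_log hu', Real.exp_log hv']
  have hA0' : 0 ≤ f y z * (f y' 0 - f y' z) * p - f y' z * (f y 0 - f y z) * p' := by
    have h5 : 0 ≤ (f y 0 * f y' 0) * (a * (1 - b) * p - b * (1 - a) * p') :=
      mul_nonneg (by positivity) hA0
    have h6 : (f y 0 * f y' 0) * (a * (1 - b) * p - b * (1 - a) * p')
        = f y z * (f y' 0 - f y' z) * p - f y' z * (f y 0 - f y z) * p' := by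
      rw [haval, hbval]
      field_simp
    linarith [h6 ▸ h5]
  have hgoal : ⟪h, (f y' 0 * f y z) • y - (f y 0 * f y' z) • y'⟫
      = f y' 0 * f y z * p - f y 0 * f y' z * p' := by
    rw [inner_sub_right, real_inner_smul_right, real_inner_smul_right]
  have hnorm : ‖h‖ ^ 2 = p - p' := by
    rw [← real_inner_self_eq_norm_sq, hpp']
  rw [hgoal, hnorm]
  nlinarith [hA0']
end
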